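/- arXiv:2401.15744 — 3 statements merged into one kernel-verified Lean document; each statement's English description precedes it below -/
import Mathlib

section
/- For a BPVEI, for every n ≥ 0, P[⋂_{j=n}^∞ {Z_j = 0}] = F_n(0) · ∏_{j=n}^∞ h_j(f_j(0)). -/
open MeasureTheory ProbabilityTheory Filter
open scoped ENNReal Topology

lemma aux_meas_randSum {Ω : Type*} {m' : MeasurableSpace Ω} (N : Ω → ℕ) (g : ℕ → Ω → ℕ)
    (hN : Measurable[m'] N) (hg : ∀ j, Measurable[m'] (g j)) :
    Measurable[m'] (fun ω => ∑ j ∈ Finset.range (N ω), g j ω) := by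
  apply measurable_to_countable'
  intro c
  have h : (fun ω => ∑ j ∈ Finset.range (N ω), g j ω) ⁻¹' {c}
      = ⋃ m, ((N ⁻¹' {m}) ∩ {ω | ∑ j ∈ Finset.range m, g j ω = c}) := by
    ext ω
    simp only [Set.mem_preimage, Set.mem_singleton_iff, Set.mem_iUnion, Set.mem_inter_iff,
      Set.mem_setOf_eq]
    constructor
    · intro hc; exact ⟨N ω, rfl, hc⟩
    · rintro ⟨m, hm, hc⟩; rw [hm]; exact hc
  rw [h]
  refine MeasurableSet.iUnion fun m => (hN (measurableSet_singleton m)).inter ?_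
  have hsum : Measurable[m'] fun ω => ∑ j ∈ Finset.range m, g j ω :=
    Finset.measurable_sum _ fun j _ => hg j
  exact hsum (measurableSet_singleton c)

lemma aux_integral_pow {Ω : Type*} {mΩ : MeasurableSpace Ω} (μ : Measure Ω)
    [IsProbabilityMeasure μ] (Y : Ω → ℕ) (hY : Measurable Y) (c : ℝ) (hc0 : 0 ≤ c) (hc1 : c ≤ 1) :
    ∫ ω, c ^ Y ω ∂μ = ∑' m : ℕ, (μ (Y ⁻¹' {m})).toReal * c ^ m := by
  have hmeas : Measurable (fun m : ℕ => c ^ m) := measurable_from_nat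
  have hmap : IsProbabilityMeasure (Measure.map Y μ) := Measure.isProbabilityMeasure_map hY.aemeasurable
  have hint : Integrable (fun m : ℕ => c ^ m) (Measure.map Y μ) := by
    refine (integrable_const (1 : ℝ)).mono' hmeas.aestronglyMeasurable ?_
    refine Filter.Eventually.of_forall fun m => ?_
    rw [Real.norm_eq_abs, abs_pow, abs_of_nonneg hc0]
    exact pow_le_one₀ hc0 hc1
  have h1 : ∫ m, (fun m : ℕ => c ^ m) m ∂(Measure.map Y μ) = ∫ ω, c ^ Y ω ∂μ :=
    integral_map hY.aemeasurable hmeas.aestronglyMeasurable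
  rw [← h1, integral_countable' hint]
  refine tsum_congr fun m => ?_
  rw [measureReal_def, Measure.map_apply hY (measurableSet_singleton m), smul_eq_mul]

/-- For a BPVEI, for every `n ≥ 0`,
`P[⋂_{j=n}^∞ {Z_j = 0}] = F_n(0) · ∏_{j=n}^∞ h_j(f_j(0))`,
where `F_n(0) = E[0^{Z_n}] = P[Z_n = 0]` and the infinite product is
`∏' j, h (n+j) (f (n+j) 0)`. -/
theorem bpvei_stay_at_zero_probability
    {Ω : Type*} [MeasurableSpace Ω] (μ : Measure Ω) [IsProbabilityMeasure μ]
    (X : ℕ → ℕ → Ω → ℕ) (I : ℕ → Ω → ℕ) (Z : ℕ → Ω → ℕ)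
    (f h : ℕ → ℝ → ℝ)
    (hXmeas : ∀ n j, Measurable (X n j))
    (hImeas : ∀ n, Measurable (I n))
    (hindep : iIndepFun
      (Sum.elim (fun p : ℕ × ℕ => X p.1 p.2) I) μ)
    (hident : ∀ n j, Measure.map (X n j) μ = Measure.map (X n 0) μ)
    (hf : ∀ n, ∀ s ∈ Set.Icc (0 : ℝ) 1, f n s = ∫ ω, s ^ X n 0 ω ∂μ)
    (hf0 : ∀ n, f n 0 < 1)
    (hh : ∀ n, ∀ s ∈ Set.Icc (0 : ℝ) 1, h n s = ∫ ω, s ^ I n ω ∂μ)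
    (hh0 : ∀ n, h n 0 < 1)
    (hZ0 : ∀ ω, Z 0 ω = 0)
    (hZ : ∀ n ω, Z (n + 1) ω = ∑ j ∈ Finset.range (Z n ω + I n ω), X n j ω) :
    ∀ n, (μ (⋂ j, ⋂ (_ : n ≤ j), {ω | Z j ω = 0})).toReal =
      (∫ ω, (0 : ℝ) ^ Z n ω ∂μ) * ∏' j : ℕ, h (n + j) (f (n + j) 0) := by
  intro n
  classical
  set κ : (ℕ × ℕ) ⊕ ℕ → Ω → ℕ := Sum.elim (fun p : ℕ × ℕ => X p.1 p.2) I with hκdef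
  have hκmeas : ∀ i, Measurable (κ i) := by
    rintro (p | m)
    · exact hXmeas p.1 p.2
    · exact hImeas m
  set lvl : (ℕ × ℕ) ⊕ ℕ → ℕ := Sum.elim Prod.fst id with hlvldef
  set G : Set ((ℕ × ℕ) ⊕ ℕ) → MeasurableSpace Ω :=
    fun S => ⨆ i ∈ S, MeasurableSpace.comap (κ i) inferInstance with hGdef
  have hmeasκG : ∀ (S) (i), i ∈ S → Measurable[G S] (κ i) := by
    intro S i hi
    have h1 : Measurable[MeasurableSpace.comap (κ i) inferInstance] (κ i) :=
      Measurable.of_comap_le le_rfl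
    exact h1.mono
      (le_iSup₂ (f := fun i (_ : i ∈ S) => MeasurableSpace.comap (κ i) inferInstance) i hi) le_rfl
  have hGmono : ∀ {S T}, S ⊆ T → G S ≤ G T := fun {S T} hST => biSup_mono hST
  -- measurability of Z m w.r.t. the σ-algebra of variables of level < m
  have hZG : ∀ m, Measurable[G {i | lvl i < m}] (Z m) := by
    intro m
    induction m with
    | zero =>
      have hz : Z 0 = fun _ => 0 := funext hZ0
      rw [hz]; exact measurable_const
    | succ m ih =>
      have hgZ : Measurable[G {i | lvl i < m + 1}] (Z m) :=
        ih.mono (hGmono fun i hi => lt_trans hi (Nat.lt_succ_self m)) le_rfl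
      have hgI : Measurable[G {i | lvl i < m + 1}] (I m) :=
        hmeasκG _ (Sum.inr m) (by simp [hlvldef])
      have hgX : ∀ j, Measurable[G {i | lvl i < m + 1}] (X m j) := fun j =>
        hmeasκG _ (Sum.inl (m, j)) (by simp [hlvldef])
      have hz : Z (m + 1) = fun ω => ∑ j ∈ Finset.range ((fun ω => Z m ω + I m ω) ω), X m j ω :=
        funext (hZ m)
      rw [hz]
      exact aux_meas_randSum _ _ (hgZ.add hgI) hgX
  have hZmeas : ∀ m, Measurable (Z m) := by
    intro m
    refine (hZG m).mono ?_ le_rfl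
    exact iSup₂_le fun i _ => (hκmeas i).comap_le
  set E : Set Ω := Z n ⁻¹' {0} with hEdef
  set B : ℕ → Set Ω := fun j => (fun ω => ∑ k ∈ Finset.range (I j ω), X j k ω) ⁻¹' {0} with hBdef
  have hBG : ∀ j, MeasurableSet[G {i | lvl i = j}] (B j) := by
    intro j
    have hgI : Measurable[G {i | lvl i = j}] (I j) := hmeasκG _ (Sum.inr j) (by simp [hlvldef])
    have hgX : ∀ k, Measurable[G {i | lvl i = j}] (X j k) := fun k =>
      hmeasκG _ (Sum.inl (j, k)) (by simp [hlvldef])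
    exact aux_meas_randSum _ _ hgI hgX (measurableSet_singleton 0)
  have hG_le : ∀ S, G S ≤ ‹MeasurableSpace Ω› := fun S =>
    iSup₂_le fun i _ => (hκmeas i).comap_le
  have hBmeas : ∀ j, MeasurableSet (B j) := fun j => hG_le _ _ (hBG j)
  have hEG : MeasurableSet[G {i | lvl i < n}] E := hZG n (measurableSet_singleton 0)
  have hEmeas : MeasurableSet E := hG_le _ _ hEG
  have hiIndep : iIndep (fun i => (inferInstance : MeasurableSpace ℕ).comap (κ i)) μ :=
    hindep.iIndep
  -- the key finite product formula
  have key : ∀ M : ℕ, μ (E ∩ ⋂ j ∈ Finset.range M, B (n + j))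
      = μ E * ∏ j ∈ Finset.range M, μ (B (n + j)) := by
    intro M
    induction M with
    | zero => simp
    | succ M ih =>
      have hdisj : Disjoint {i | lvl i < n + M} {i | lvl i = n + M} := by
        rw [Set.disjoint_left]
        intro i hi1 hi2
        simp only [Set.mem_setOf_eq] at hi1 hi2
        omega
      have hindep2 : Indep (G {i | lvl i < n + M}) (G {i | lvl i = n + M}) μ :=
        indep_iSup_of_disjoint (fun i => (hκmeas i).comap_le) hiIndep hdisj
      have hA : MeasurableSet[G {i | lvl i < n + M}] (E ∩ ⋂ j ∈ Finset.range M, B (n + j)) := by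
        refine MeasurableSet.inter ?_ ?_
        · exact hGmono (fun i (hi : lvl i < n) => lt_of_lt_of_le hi (Nat.le_add_right n M)) _ hEG
        · refine MeasurableSet.biInter (Set.to_countable _) fun j hj => ?_
          refine hGmono ?_ _ (hBG (n + j))
          intro i hi
          simp only [Set.mem_setOf_eq] at hi ⊢
          have : j < M := Finset.mem_range.mp hj
          omega
      have hBs : MeasurableSet[G {i | lvl i = n + M}] (B (n + M)) := hBG (n + M)
      have hmul : μ ((E ∩ ⋂ j ∈ Finset.range M, B (n + j)) ∩ B (n + M))
          = μ (E ∩ ⋂ j ∈ Finset.range M, B (n + j)) * μ (B (n + M)) :=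
        (hindep2.indepSet_of_measurableSet hA hBs).measure_inter_eq_mul
      have hset : E ∩ ⋂ j ∈ Finset.range (M + 1), B (n + j)
          = (E ∩ ⋂ j ∈ Finset.range M, B (n + j)) ∩ B (n + M) := by
        rw [Finset.range_add_one, Finset.set_biInter_insert]
        ext ω; simp only [Set.mem_inter_iff]; tauto
      rw [hset, hmul, ih, Finset.range_add_one, Finset.prod_insert Finset.notMem_range_self]
      ring
  -- computation of μ (B j)
  have hq : ∀ j k, μ (X j k ⁻¹' {0}) = μ (X j 0 ⁻¹' {0}) := by
    intro j k
    rw [← Measure.map_apply (hXmeas j k) (measurableSet_singleton 0), hident j k,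
      Measure.map_apply (hXmeas j 0) (measurableSet_singleton 0)]
  have hBval : ∀ j, μ (B j) = ∑' m : ℕ, μ (I j ⁻¹' {m}) * μ (X j 0 ⁻¹' {0}) ^ m := by
    intro j
    have hdecomp : B j = ⋃ m : ℕ, ((I j ⁻¹' {m}) ∩ ⋂ k ∈ Finset.range m, X j k ⁻¹' {0}) := by
      ext ω
      simp only [hBdef, Set.mem_preimage, Set.mem_singleton_iff, Set.mem_iUnion,
        Set.mem_inter_iff, Set.mem_iInter, Finset.sum_eq_zero_iff, Finset.mem_range]
      constructor
      · intro hs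
        exact ⟨I j ω, rfl, fun k hk => hs k hk⟩
      · rintro ⟨m, hm, hks⟩
        rw [hm]
        exact fun k hk => hks k hk
    have hpd : Pairwise (Function.onFun Disjoint
        fun m : ℕ => (I j ⁻¹' {m}) ∩ ⋂ k ∈ Finset.range m, X j k ⁻¹' {0}) := by
      intro a b hab
      refine Set.disjoint_left.mpr ?_
      rintro ω ⟨ha, -⟩ ⟨hb, -⟩
      exact hab (ha.symm.trans hb)
    have hmeasC : ∀ m : ℕ, MeasurableSet
        ((I j ⁻¹' {m}) ∩ ⋂ k ∈ Finset.range m, X j k ⁻¹' {0}) := fun m => by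
      refine (hImeas j (measurableSet_singleton m)).inter ?_
      exact MeasurableSet.biInter (Set.to_countable _) fun k _ =>
        hXmeas j k (measurableSet_singleton 0)
    rw [hdecomp, measure_iUnion hpd hmeasC]
    refine tsum_congr fun m => ?_
    -- independence computation for each piece
    set S : Finset ((ℕ × ℕ) ⊕ ℕ) :=
      insert (Sum.inr j) ((Finset.range m).image fun k => Sum.inl (j, k)) with hSdef
    set s : (ℕ × ℕ) ⊕ ℕ → Set Ω :=
      Sum.elim (fun p => X p.1 p.2 ⁻¹' {0}) (fun _ => I j ⁻¹' {m}) with hsdef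
    have hnotmem : (Sum.inr j : (ℕ × ℕ) ⊕ ℕ) ∉ (Finset.range m).image fun k => Sum.inl (j, k) := by
      simp
    have hms : ∀ i ∈ S, MeasurableSet[(inferInstance : MeasurableSpace ℕ).comap (κ i)] (s i) := by
      rintro (p | j') hi
      · exact ⟨{0}, trivial, rfl⟩
      · have : j' = j := by
          simp only [hSdef, Finset.mem_insert, Finset.mem_image] at hi
          rcases hi with hi | ⟨k, -, hk⟩
          · exact (Sum.inr.inj hi)
          · exact absurd hk (by simp)
        subst this
        exact ⟨{m}, trivial, rfl⟩
    have hbiInter : (⋂ i ∈ S, s i) = (I j ⁻¹' {m}) ∩ ⋂ k ∈ Finset.range m, X j k ⁻¹' {0} := by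
      rw [hSdef, Finset.set_biInter_insert]
      congr 1
      rw [Finset.set_biInter_finset_image]
      rfl
    have hprod := hiIndep.meas_biInter hms (S := S)
    have h2 : ∏ x ∈ Finset.range m, μ (s (Sum.inl (j, x))) = μ (X j 0 ⁻¹' {0}) ^ m := by
      calc ∏ x ∈ Finset.range m, μ (s (Sum.inl (j, x)))
          = ∏ x ∈ Finset.range m, μ (X j 0 ⁻¹' {0}) :=
            Finset.prod_congr rfl fun k _ => by simpa [hsdef] using hq j k
        _ = μ (X j 0 ⁻¹' {0}) ^ m := by rw [Finset.prod_const, Finset.card_range]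
    rw [← hbiInter, hprod, hSdef, Finset.prod_insert hnotmem,
      Finset.prod_image (fun a _ b _ hab => by simpa using hab),
      h2]
    rfl
  -- real-valued quantities
  have hf0val : ∀ j, f j 0 = (μ (X j 0 ⁻¹' {0})).toReal := by
    intro j
    rw [hf j 0 ⟨le_rfl, zero_le_one⟩,
      aux_integral_pow μ (X j 0) (hXmeas j 0) 0 le_rfl zero_le_one,
      tsum_eq_single 0 (fun m hm => by simp [zero_pow hm])]
    simp
  have hfmem : ∀ j, f j 0 ∈ Set.Icc (0 : ℝ) 1 := by
    intro j
    rw [hf0val j]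
    refine ⟨ENNReal.toReal_nonneg, ?_⟩
    calc (μ (X j 0 ⁻¹' {0})).toReal ≤ (1 : ℝ≥0∞).toReal :=
          ENNReal.toReal_mono ENNReal.one_ne_top prob_le_one
      _ = 1 := by simp
  have hhval : ∀ j, h j (f j 0) = (μ (B j)).toReal := by
    intro j
    rw [hh j _ (hfmem j), aux_integral_pow μ (I j) (hImeas j) _ (hfmem j).1 (hfmem j).2,
      hBval j, ENNReal.tsum_toReal_eq (fun m =>
        ENNReal.mul_ne_top (measure_ne_top μ _) (ENNReal.pow_ne_top (measure_ne_top μ _)))]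
    refine tsum_congr fun m => ?_
    rw [ENNReal.toReal_mul, ENNReal.toReal_pow, hf0val j]
  -- set identity
  have hinter : (⋂ j, ⋂ (_ : n ≤ j), {ω | Z j ω = 0}) = E ∩ ⋂ j : ℕ, B (n + j) := by
    ext ω
    simp only [Set.mem_iInter, Set.mem_setOf_eq, Set.mem_inter_iff, hEdef, hBdef,
      Set.mem_preimage, Set.mem_singleton_iff]
    constructor
    · intro hall
      refine ⟨hall n le_rfl, fun j => ?_⟩
      have h1 : Z (n + j) ω = 0 := hall _ (Nat.le_add_right n j)
      have h2 : Z (n + j + 1) ω = 0 := hall _ (by omega)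
      have h3 := hZ (n + j) ω
      rw [h1, zero_add, h2] at h3
      exact h3.symm
    · rintro ⟨hE0, hBall⟩
      have hd : ∀ d, Z (n + d) ω = 0 := by
        intro d
        induction d with
        | zero => exact hE0
        | succ d ihd =>
          have h3 := hZ (n + d) ω
          rw [ihd, zero_add] at h3
          rw [show n + (d + 1) = (n + d) + 1 by omega, h3]
          exact hBall d
      intro j hj
      obtain ⟨d, rfl⟩ := Nat.exists_eq_add_of_le hj
      exact hd d
  -- limits
  set p : ℕ → ℝ := fun j => (μ (B j)).toReal with hpdef
  have hp0 : ∀ j, 0 ≤ p j := fun j => ENNReal.toReal_nonneg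
  have hp1 : ∀ j, p j ≤ 1 := by
    intro j
    calc p j ≤ (1 : ℝ≥0∞).toReal := ENNReal.toReal_mono ENNReal.one_ne_top prob_le_one
      _ = 1 := by simp
  have hanti : Antitone (fun F : Finset ℕ => ∏ j ∈ F, p (n + j)) := by
    intro F F' hFF'
    show ∏ j ∈ F', p (n + j) ≤ ∏ j ∈ F, p (n + j)
    have hsd := Finset.prod_sdiff (f := fun j => p (n + j)) hFF'
    rw [← hsd]
    have hle1 : ∏ j ∈ F' \ F, p (n + j) ≤ 1 :=
      Finset.prod_le_one (fun j _ => hp0 _) (fun j _ => hp1 _)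
    have hge0 : 0 ≤ ∏ j ∈ F, p (n + j) := Finset.prod_nonneg fun j _ => hp0 _
    exact mul_le_of_le_one_left hge0 hle1
  have hbdd : BddBelow (Set.range fun F : Finset ℕ => ∏ j ∈ F, p (n + j)) := by
    refine ⟨0, ?_⟩
    rintro x ⟨F, rfl⟩
    exact Finset.prod_nonneg fun j _ => hp0 _
  have hHasProd : HasProd (fun j => p (n + j)) (⨅ F : Finset ℕ, ∏ j ∈ F, p (n + j)) :=
    tendsto_atTop_ciInf hanti hbdd
  have htendP : Tendsto (fun M => ∏ j ∈ Finset.range M, p (n + j)) atTop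
      (𝓝 (∏' j, p (n + j))) := by
    rw [hHasProd.tprod_eq]
    exact hHasProd.tendsto_prod_nat
  set Es : ℕ → Set Ω := fun M => E ∩ ⋂ j ∈ Finset.range M, B (n + j) with hEsdef
  have hEsmeas : ∀ M, MeasurableSet (Es M) := fun M =>
    hEmeas.inter (MeasurableSet.biInter (Set.to_countable _) fun j _ => hBmeas _)
  have hEsanti : Antitone Es := by
    intro a b hab ω hω
    obtain ⟨h1, h2⟩ := hω
    exact ⟨h1, Set.mem_iInter₂.2 fun j hj => Set.mem_iInter₂.1 h2 j
      (Finset.mem_range.2 (lt_of_lt_of_le (Finset.mem_range.1 hj) hab))⟩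
  have hiInterEs : ⋂ M, Es M = E ∩ ⋂ j : ℕ, B (n + j) := by
    ext ω
    simp only [hEsdef, Set.mem_iInter, Set.mem_inter_iff, Finset.mem_range]
    constructor
    · intro hall
      exact ⟨(hall 0).1, fun j => (hall (j + 1)).2 j (Nat.lt_succ_self j)⟩
    · rintro ⟨h1, h2⟩ M
      exact ⟨h1, fun j _ => h2 j⟩
  have htendμ : Tendsto (fun M => μ (Es M)) atTop (𝓝 (μ (⋂ M, Es M))) :=
    tendsto_measure_iInter_atTop (fun M => (hEsmeas M).nullMeasurableSet) hEsanti
      ⟨0, measure_ne_top μ _⟩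
  have htendμ' : Tendsto (fun M => (μ (Es M)).toReal) atTop (𝓝 ((μ (⋂ M, Es M)).toReal)) :=
    (ENNReal.tendsto_toReal (measure_ne_top μ _)).comp htendμ
  have heq : ∀ M, (μ (Es M)).toReal = (μ E).toReal * ∏ j ∈ Finset.range M, p (n + j) := by
    intro M
    rw [hEsdef]
    rw [key M, ENNReal.toReal_mul, ENNReal.toReal_prod]
  have hlim2 : Tendsto (fun M => (μ (Es M)).toReal) atTop
      (𝓝 ((μ E).toReal * ∏' j, p (n + j))) := by
    simp_rw [heq]
    exact htendP.const_mul _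
  have hfinal : (μ (⋂ M, Es M)).toReal = (μ E).toReal * ∏' j, p (n + j) :=
    tendsto_nhds_unique htendμ' hlim2
  rw [hinter, ← hiInterEs, hfinal]
  congr 1
  · rw [aux_integral_pow μ (Z n) (hZmeas n) 0 le_rfl zero_le_one,
      tsum_eq_single 0 (fun m hm => by simp [zero_pow hm])]
    simp [hEdef]
  · exact tprod_congr fun j => (hhval (n + j)).symm
end

section
/- For a BPVEI, let q = P[⋃_{n=0}^∞ ⋂_{j=n}^∞ {Z_j = 0}] be the probability that the population eventually reaches 0 and remains there forever. Then q = 1 if and only if both lim_{n→∞} f_{−1,n}(0) = 1 and ∑_{j=0}^∞ (1 − h_j(f_j(0))) < ∞. -/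
open MeasureTheory ProbabilityTheory Filter

set_option linter.unusedSectionVars false
set_option linter.unusedVariables false
set_option linter.unnecessarySimpa false
set_option maxHeartbeats 1000000

/-- `pgfComp f lo len` is the composition `f lo ∘ f (lo+1) ∘ ⋯ ∘ f (lo+len-1)`
(the identity if `len = 0`).  In the notation of the paper,
`f_{k,n} = pgfComp f (k+1) (n-k)` for `-1 ≤ k ≤ n`; in particular
`f_{-1,n} = pgfComp f 0 (n+1)`. -/
noncomputable def pgfComp (f : ℕ → ℝ → ℝ) (lo len : ℕ) : ℝ → ℝ :=
  ((List.range' lo len).map f).foldr (· ∘ ·) id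


lemma foldr_comp_eq (l : List (ℝ → ℝ)) (c : ℝ → ℝ) :
    l.foldr (· ∘ ·) c = l.foldr (· ∘ ·) id ∘ c := by
  induction l with
  | nil => simp
  | cons a l ih => simp [List.foldr_cons, ih, Function.comp_assoc]

lemma pgfComp_zero (f : ℕ → ℝ → ℝ) (lo : ℕ) : pgfComp f lo 0 = id := rfl

lemma pgfComp_one (f : ℕ → ℝ → ℝ) (lo : ℕ) : pgfComp f lo 1 = f lo := by
  simp [pgfComp, List.range']

lemma pgfComp_append (f : ℕ → ℝ → ℝ) (lo a b : ℕ) :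
    pgfComp f lo (a + b) = pgfComp f lo a ∘ pgfComp f (lo + a) b := by
  unfold pgfComp
  have : List.range' lo (a + b) = List.range' lo a ++ List.range' (lo + a) b := by
    have := List.range'_append (s := lo) (m := a) (n := b) (step := 1)
    simpa [Nat.add_comm] using this.symm
  rw [this, List.map_append, List.foldr_append, foldr_comp_eq]

lemma pgfComp_succ_right (f : ℕ → ℝ → ℝ) (lo len : ℕ) :
    pgfComp f lo (len + 1) = pgfComp f lo len ∘ f (lo + len) := by
  rw [pgfComp_append f lo len 1, pgfComp_one]

lemma pgfComp_succ_left (f : ℕ → ℝ → ℝ) (lo len : ℕ) :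
    pgfComp f lo (len + 1) = f lo ∘ pgfComp f (lo + 1) len := by
  rw [show len + 1 = 1 + len from Nat.add_comm len 1, pgfComp_append f lo 1 len, pgfComp_one]

section Generic
variable {Ω : Type*} [MeasurableSpace Ω] {μ : Measure Ω} [IsProbabilityMeasure μ]

lemma bdd_integrable {φ : Ω → ℝ} (hφ : Measurable φ) {C : ℝ} (h : ∀ ω, ‖φ ω‖ ≤ C) :
    Integrable φ μ :=
  (integrable_const C).mono' hφ.aestronglyMeasurable (Eventually.of_forall h)

lemma pow_meas {t : ℝ} {N : Ω → ℕ} (hN : Measurable N) :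
    Measurable (fun ω => t ^ N ω) :=
  (measurable_from_top (f := fun n : ℕ => t ^ n)).comp hN

lemma pow_int {t : ℝ} (ht : t ∈ Set.Icc (0:ℝ) 1) {N : Ω → ℕ} (hN : Measurable N) :
    Integrable (fun ω => t ^ N ω) μ := by
  refine bdd_integrable (pow_meas hN) (C := 1) (fun ω => ?_)
  rw [Real.norm_eq_abs, abs_of_nonneg (pow_nonneg ht.1 _)]
  exact pow_le_one₀ ht.1 ht.2

lemma pgf_nonneg {t : ℝ} (ht : t ∈ Set.Icc (0:ℝ) 1) (N : Ω → ℕ) :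
    0 ≤ ∫ ω, t ^ N ω ∂μ :=
  integral_nonneg fun ω => pow_nonneg ht.1 _

lemma pgf_le_one {t : ℝ} (ht : t ∈ Set.Icc (0:ℝ) 1) {N : Ω → ℕ} (hN : Measurable N) :
    ∫ ω, t ^ N ω ∂μ ≤ 1 := by
  calc ∫ ω, t ^ N ω ∂μ ≤ ∫ _ω, (1:ℝ) ∂μ :=
        integral_mono (pow_int ht hN) (integrable_const 1)
          (fun ω => pow_le_one₀ ht.1 ht.2)
    _ = 1 := by simp

lemma pgf_mono {t₁ t₂ : ℝ} (h0 : 0 ≤ t₁) (h12 : t₁ ≤ t₂) (h21 : t₂ ≤ 1)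
    {N : Ω → ℕ} (hN : Measurable N) :
    ∫ ω, t₁ ^ N ω ∂μ ≤ ∫ ω, t₂ ^ N ω ∂μ :=
  integral_mono (pow_int ⟨h0, h12.trans h21⟩ hN) (pow_int ⟨h0.trans h12, h21⟩ hN)
    (fun ω => pow_le_pow_left₀ h0 h12 _)

lemma pgf_one (N : Ω → ℕ) : ∫ ω, (1:ℝ) ^ N ω ∂μ = 1 := by simp

lemma pgf_zero {N : Ω → ℕ} (hN : Measurable N) :
    ∫ ω, (0:ℝ) ^ N ω ∂μ = (μ {ω | N ω = 0}).toReal := by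
  have hm : MeasurableSet {ω | N ω = 0} := hN (measurableSet_singleton 0)
  have : (fun ω => (0:ℝ) ^ N ω) = Set.indicator {ω | N ω = 0} (fun _ => (1:ℝ)) := by
    funext ω
    by_cases h : N ω = 0 <;> simp [h, Set.indicator, zero_pow]
  rw [this, integral_indicator hm]
  simp
  rfl

lemma pgf_lt_one {t : ℝ} (ht : t ∈ Set.Icc (0:ℝ) 1) (ht1 : t < 1) {N : Ω → ℕ}
    (hN : Measurable N) (h0 : ∫ ω, (0:ℝ) ^ N ω ∂μ < 1) :
    ∫ ω, t ^ N ω ∂μ < 1 := by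
  have hp0 : 0 ≤ ∫ ω, (0:ℝ) ^ N ω ∂μ := pgf_nonneg ⟨le_refl 0, zero_le_one⟩ N
  have hptw : ∀ ω, t ^ N ω ≤ (0:ℝ) ^ N ω + t * (1 - (0:ℝ) ^ N ω) := by
    intro ω
    rcases Nat.eq_zero_or_pos (N ω) with h | h
    · simp [h]
    · rw [zero_pow h.ne']
      simpa using (pow_le_pow_of_le_one ht.1 ht.2 h).trans_eq (pow_one t)
  have hkey : ∫ ω, t ^ N ω ∂μ ≤ (∫ ω, (0:ℝ) ^ N ω ∂μ) + t * (1 - ∫ ω, (0:ℝ) ^ N ω ∂μ) := by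
    have h1 : Integrable (fun ω => (0:ℝ) ^ N ω) μ := pow_int ⟨le_refl 0, zero_le_one⟩ hN
    have h2 : Integrable (fun ω => t * (1 - (0:ℝ) ^ N ω)) μ := by
      have := (((integrable_const (1:ℝ)).sub h1).const_mul t)
      simpa [Pi.sub_apply] using this
    calc ∫ ω, t ^ N ω ∂μ ≤ ∫ ω, ((0:ℝ) ^ N ω + t * (1 - (0:ℝ) ^ N ω)) ∂μ :=
          integral_mono (pow_int ht hN)
            (h1.add h2) hptw
      _ = (∫ ω, (0:ℝ) ^ N ω ∂μ) + t * (1 - ∫ ω, (0:ℝ) ^ N ω ∂μ) := by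
          rw [integral_add h1 h2, integral_const_mul, integral_sub (integrable_const 1) h1]
          simp
  nlinarith

lemma pgf_tendsto_one {u : ℕ → ℝ} (hu : ∀ k, u k ∈ Set.Icc (0:ℝ) 1)
    (hlim : Tendsto u atTop (nhds 1)) {N : Ω → ℕ} (hN : Measurable N) :
    Tendsto (fun k => ∫ ω, (u k) ^ N ω ∂μ) atTop (nhds 1) := by
  have := tendsto_integral_of_dominated_convergence (μ := μ)
    (F := fun k ω => (u k) ^ N ω) (f := fun _ω => (1:ℝ)) (bound := fun _ => (1:ℝ))
    (fun k => (pow_meas hN).aestronglyMeasurable)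
    (integrable_const 1)
    (fun k => Eventually.of_forall (fun ω => by
      rw [Real.norm_eq_abs, abs_of_nonneg (pow_nonneg (hu k).1 _)]
      exact pow_le_one₀ (hu k).1 (hu k).2))
    (Eventually.of_forall (fun ω => by
      simpa using (hlim.pow (N ω)).congr' (Eventually.of_forall fun k => rfl)))
  simpa using this

end Generic

section Infra
variable {Ω : Type*} [MeasurableSpace Ω] {μ : Measure Ω} [IsProbabilityMeasure μ]

/-- composing with a random index is measurable -/
lemma measurable_rand_index {m' : MeasurableSpace Ω} {g : Ω → ℕ} {F : ℕ → Ω → ℕ}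
    (hg : Measurable[m'] g) (hF : ∀ k, Measurable[m'] (F k)) :
    Measurable[m'] (fun ω => F (g ω) ω) := by
  refine measurable_to_countable' (fun c => ?_)
  have : (fun ω => F (g ω) ω) ⁻¹' {c} = ⋃ k, (g ⁻¹' {k} ∩ (F k) ⁻¹' {c}) := by
    ext ω
    simp only [Set.mem_preimage, Set.mem_singleton_iff, Set.mem_iUnion, Set.mem_inter_iff]
    constructor
    · intro hc; exact ⟨g ω, rfl, hc⟩
    · rintro ⟨k, hk, hc⟩; rw [hk]; exact hc
  rw [this]
  exact MeasurableSet.iUnion fun k =>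
    (hg (measurableSet_singleton k)).inter (hF k (measurableSet_singleton c))

/-- partition formula for integrals -/
lemma integral_eq_tsum_partition {ι : Type*} [Countable ι] {g : Ω → ℝ} (hg : Integrable g μ)
    {E : ι → Set Ω} (hme : ∀ i, MeasurableSet (E i)) (hdisj : Pairwise (Function.onFun Disjoint E))
    (hcover : (⋃ i, E i) = Set.univ) :
    ∫ ω, g ω ∂μ = ∑' i, ∫ ω in E i, g ω ∂μ := by
  rw [← setIntegral_univ, ← hcover]
  exact integral_iUnion hme hdisj (hcover ▸ hg.integrableOn)

/-- product of integrals for functions measurable wrt independent σ-algebras -/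
lemma indep_integral_mul {m₁ m₂ m0 : MeasurableSpace Ω} {μ : Measure Ω} [IsProbabilityMeasure μ]
    (h1 : m₁ ≤ m0) (h2 : m₂ ≤ m0) (hInd : @Indep Ω m₁ m₂ m0 μ)
    {φ ψ : Ω → ℝ} (hφ : Measurable[m₁] φ) (hψ : Measurable[m₂] ψ)
    {C : ℝ} (hφb : ∀ ω, ‖φ ω‖ ≤ C) (hψb : ∀ ω, ‖ψ ω‖ ≤ C) :
    ∫ ω, φ ω * ψ ω ∂μ = (∫ ω, φ ω ∂μ) * ∫ ω, ψ ω ∂μ := by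
  have hIF : @IndepFun Ω ℝ ℝ m0 _ _ φ ψ μ := by
    apply indep_of_indep_of_le_left (indep_of_indep_of_le_right hInd ?_) ?_
    · exact hψ.comap_le
    · exact hφ.comap_le
  exact hIF.integral_fun_mul_eq_mul_integral
    (bdd_integrable (hφ.mono h1 le_rfl) hφb).aestronglyMeasurable (bdd_integrable (hψ.mono h2 le_rfl) hψb).aestronglyMeasurable

/-- measure of intersection for independent σ-algebras -/
lemma indep_meas_inter {m₁ m₂ m0 : MeasurableSpace Ω} {μ : Measure Ω}
    (hInd : @Indep Ω m₁ m₂ m0 μ) {A B : Set Ω}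
    (hA : MeasurableSet[m₁] A) (hB : MeasurableSet[m₂] B) :
    μ (A ∩ B) = μ A * μ B := by
  rw [Indep_iff] at hInd
  exact hInd A B hA hB

/-- reindexing an iIndepFun family along an injective map -/
lemma iIndepFun_precomp {ι ι' : Type*} {β : Type*} [mβ : MeasurableSpace β]
    {g : ι → Ω → β} (hg : iIndepFun g μ) (u : ι' → ι)
    (hu : Function.Injective u) :
    iIndepFun (fun i => g (u i)) μ := by
  classical
  rw [iIndepFun_iff_measure_inter_preimage_eq_mul] at hg ⊢
  intro S sets hsets
  have key := hg (S.image u)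
    (sets := Function.extend u sets (fun _ => Set.univ)) ?_
  · have h1 : (⋂ i ∈ S.image u, g i ⁻¹' Function.extend u sets (fun _ => Set.univ) i)
        = ⋂ i ∈ S, g (u i) ⁻¹' sets i := by
      rw [Finset.set_biInter_finset_image]
      exact Set.iInter₂_congr fun i _ => by rw [hu.extend_apply]
    have h2 : (∏ i ∈ S.image u, μ (g i ⁻¹' Function.extend u sets (fun _ => Set.univ) i))
        = ∏ i ∈ S, μ (g (u i) ⁻¹' sets i) := by
      rw [Finset.prod_image (fun a _ b _ hab => hu hab)]
      exact Finset.prod_congr rfl fun i _ => by rw [hu.extend_apply]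
    rw [h1, h2] at key
    exact key
  · intro i hi
    rcases Finset.mem_image.1 hi with ⟨a, ha, rfl⟩
    rw [hu.extend_apply]
    exact hsets a ha

/-- Weierstrass product inequality -/
lemma one_sub_sum_le_prod {ι : Type*} (s : Finset ι) (a : ι → ℝ)
    (h0 : ∀ i ∈ s, 0 ≤ a i) (h1 : ∀ i ∈ s, a i ≤ 1) :
    1 - ∑ i ∈ s, (1 - a i) ≤ ∏ i ∈ s, a i := by
  classical
  induction s using Finset.induction with
  | empty => simp
  | @insert i s' hns ih =>
    have h0i := h0 i (Finset.mem_insert_self i s')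
    have h1i := h1 i (Finset.mem_insert_self i s')
    have h0' : ∀ j ∈ s', 0 ≤ a j := fun j hj => h0 j (Finset.mem_insert_of_mem hj)
    have h1' : ∀ j ∈ s', a j ≤ 1 := fun j hj => h1 j (Finset.mem_insert_of_mem hj)
    have IH := ih h0' h1'
    rw [Finset.prod_insert hns, Finset.sum_insert hns]
    have hsum0 : 0 ≤ ∑ j ∈ s', (1 - a j) :=
      Finset.sum_nonneg fun j hj => by linarith [h1' j hj]
    have step1 : a i * (1 - ∑ j ∈ s', (1 - a j)) ≤ a i * ∏ j ∈ s', a j :=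
      mul_le_mul_of_nonneg_left IH h0i
    nlinarith

/-- factors in `[0,1]`: product is at most any single factor -/
lemma prod_le_single_factor {ι : Type*} (s : Finset ι) (a : ι → ℝ)
    (h0 : ∀ i ∈ s, 0 ≤ a i) (h1 : ∀ i ∈ s, a i ≤ 1) {i : ι} (hi : i ∈ s) :
    ∏ j ∈ s, a j ≤ a i := by
  classical
  rw [← Finset.prod_erase_mul s a hi]
  have : ∏ j ∈ s.erase i, a j ≤ 1 :=
    Finset.prod_le_one (fun j hj => h0 j (Finset.mem_of_mem_erase hj))
      (fun j hj => h1 j (Finset.mem_of_mem_erase hj))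
  nlinarith [h0 i hi, Finset.prod_nonneg (fun j (hj : j ∈ s.erase i) => h0 j (Finset.mem_of_mem_erase hj))]

end Infra

section More
variable {Ω : Type*} [MeasurableSpace Ω] {μ : Measure Ω} [IsProbabilityMeasure μ]

lemma pgf_eq_tsum {t : ℝ} (ht : t ∈ Set.Icc (0:ℝ) 1) {N : Ω → ℕ} (hN : Measurable N) :
    ∫ ω, t ^ N ω ∂μ = ∑' b : ℕ, t ^ b * (μ {ω | N ω = b}).toReal := by
  have hme : ∀ b : ℕ, MeasurableSet {ω | N ω = b} := fun b => hN (measurableSet_singleton b)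
  have hdisj : Pairwise (Function.onFun Disjoint (fun b => {ω | N ω = b})) := by
    intro a b hab
    rw [Function.onFun, Set.disjoint_left]
    intro ω ha hb
    have ha' : N ω = a := ha
    have hb' : N ω = b := hb
    exact hab (ha'.symm.trans hb')
  have hcover : (⋃ b : ℕ, {ω | N ω = b}) = Set.univ := by
    ext ω; simp
  rw [integral_eq_tsum_partition (pow_int ht hN) hme hdisj hcover]
  refine tsum_congr fun b => ?_
  have : ∫ ω in {ω | N ω = b}, t ^ N ω ∂μ = ∫ ω in {ω | N ω = b}, t ^ b ∂μ :=
    setIntegral_congr_fun (hme b) (fun ω hω => by rw [show N ω = b from hω])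
  rw [this, setIntegral_const, smul_eq_mul, mul_comm]
  rfl

lemma indep_setIntegral {m₁ m₂ m0 : MeasurableSpace Ω} {μ : Measure Ω} [IsProbabilityMeasure μ]
    (h1 : m₁ ≤ m0) (h2 : m₂ ≤ m0) (hInd : @Indep Ω m₁ m₂ m0 μ)
    {E : Set Ω} (hE : MeasurableSet[m₁] E) {ψ : Ω → ℝ} (hψ : Measurable[m₂] ψ)
    {C : ℝ} (hb : ∀ ω, ‖ψ ω‖ ≤ C) :
    ∫ ω in E, ψ ω ∂μ = (μ E).toReal * ∫ ω, ψ ω ∂μ := by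
  have hind : (fun ω => Set.indicator E (fun _ => (1:ℝ)) ω * ψ ω) = E.indicator ψ := by
    funext ω
    by_cases h : ω ∈ E <;> simp [h]
  have hφm : Measurable[m₁] (Set.indicator E (fun _ => (1:ℝ))) :=
    measurable_const.indicator hE
  have hmul := indep_integral_mul h1 h2 hInd hφm hψ
    (C := max C 1)
    (fun ω => by
      by_cases h : ω ∈ E <;>
        simp [h, Set.indicator_of_mem, Set.indicator_of_notMem, le_max_right, abs_of_nonneg])
    (fun ω => (hb ω).trans (le_max_left C 1))
  rw [show (∫ ω, Set.indicator E (fun _ => (1:ℝ)) ω ∂μ) = (μ E).toReal by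
      rw [integral_indicator (h1 _ hE)]; simp; rfl] at hmul
  rw [← integral_indicator (h1 _ hE), ← hind, hmul]

end More

/-- For a BPVEI, let `q = P[⋃_n ⋂_{j≥n} {Z_j = 0}]` be the
probability that the population eventually reaches `0` and remains there forever.
Then `q = 1` if and only if `lim_n f_{-1,n}(0) = 1` and
`∑_j (1 − h_j(f_j(0))) < ∞`. -/
theorem bpvei_extinction_criterion
    {Ω : Type*} [MeasurableSpace Ω] (μ : Measure Ω) [IsProbabilityMeasure μ]
    (X : ℕ → ℕ → Ω → ℕ) (I : ℕ → Ω → ℕ) (Z : ℕ → Ω → ℕ)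
    (f h : ℕ → ℝ → ℝ)
    (hXmeas : ∀ n j, Measurable (X n j))
    (hImeas : ∀ n, Measurable (I n))
    (hindep : iIndepFun
      (Sum.elim (fun p : ℕ × ℕ => X p.1 p.2) I) μ)
    (hident : ∀ n j, Measure.map (X n j) μ = Measure.map (X n 0) μ)
    (hf : ∀ n, ∀ s ∈ Set.Icc (0 : ℝ) 1, f n s = ∫ ω, s ^ X n 0 ω ∂μ)
    (hf0 : ∀ n, f n 0 < 1)
    (hh : ∀ n, ∀ s ∈ Set.Icc (0 : ℝ) 1, h n s = ∫ ω, s ^ I n ω ∂μ)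
    (hh0 : ∀ n, h n 0 < 1)
    (hZ0 : ∀ ω, Z 0 ω = 0)
    (hZ : ∀ n ω, Z (n + 1) ω = ∑ j ∈ Finset.range (Z n ω + I n ω), X n j ω) :
    μ (⋃ n, ⋂ j, ⋂ (_ : n ≤ j), {ω | Z j ω = 0}) = 1 ↔
      (Tendsto (fun n => pgfComp f 0 (n + 1) 0) atTop (nhds 1) ∧
        Summable (fun j => 1 - h j (f j 0))) := by
  classical
  -- ## Stage 0: coordinate σ-algebras and independence infrastructure
  have hWmeas : ∀ i : (ℕ × ℕ) ⊕ ℕ, Measurable (Sum.elim (fun p : ℕ × ℕ => X p.1 p.2) I i) := by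
    rintro (⟨n, j⟩ | n)
    · exact hXmeas n j
    · exact hImeas n
  set 𝓕 : (ℕ × ℕ) ⊕ ℕ → MeasurableSpace Ω := fun i =>
    MeasurableSpace.comap (Sum.elim (fun p : ℕ × ℕ => X p.1 p.2) I i) inferInstance with h𝓕def
  have hiI : iIndep 𝓕 μ := hindep.iIndep
  have h𝓕le : ∀ i, 𝓕 i ≤ ‹MeasurableSpace Ω› := fun i => (hWmeas i).comap_le
  have hIndepT : ∀ t : Set ((ℕ × ℕ) ⊕ ℕ), Indep (⨆ i ∈ t, 𝓕 i) (⨆ i ∈ tᶜ, 𝓕 i) μ :=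
    fun t => indep_biSup_compl h𝓕le hiI t
  have hsuple : ∀ t : Set ((ℕ × ℕ) ⊕ ℕ), (⨆ i ∈ t, 𝓕 i) ≤ ‹MeasurableSpace Ω› :=
    fun t => iSup₂_le fun i _ => h𝓕le i
  have hmemX : ∀ (t : Set ((ℕ × ℕ) ⊕ ℕ)) (n j : ℕ), Sum.inl (n, j) ∈ t →
      Measurable[⨆ i ∈ t, 𝓕 i] (X n j) := by
    intro t n j hmem
    have h1 : Measurable[𝓕 (Sum.inl (n, j))] (X n j) := measurable_iff_comap_le.2 le_rfl
    exact h1.mono (le_biSup 𝓕 hmem) le_rfl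
  have hmemI : ∀ (t : Set ((ℕ × ℕ) ⊕ ℕ)) (n : ℕ), Sum.inr n ∈ t →
      Measurable[⨆ i ∈ t, 𝓕 i] (I n) := by
    intro t n hmem
    have h1 : Measurable[𝓕 (Sum.inr n)] (I n) := measurable_iff_comap_le.2 le_rfl
    exact h1.mono (le_biSup 𝓕 hmem) le_rfl
  set Sl : ℕ → Set ((ℕ × ℕ) ⊕ ℕ) := fun m => {i | Sum.elim Prod.fst id i < m} with hSldef
  -- measurability of `Z`
  have hZsup : ∀ n, Measurable[⨆ i ∈ Sl n, 𝓕 i] (Z n) := by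
    intro n
    induction n with
    | zero =>
      have h0 : Z 0 = fun _ => 0 := funext hZ0
      rw [h0]; exact measurable_const
    | succ n ih =>
      have hmono : (⨆ i ∈ Sl n, 𝓕 i) ≤ ⨆ i ∈ Sl (n + 1), 𝓕 i :=
        biSup_mono fun i (hi : Sum.elim Prod.fst id i < n) => hi.trans (Nat.lt_succ_self n)
      have hZn : Measurable[⨆ i ∈ Sl (n + 1), 𝓕 i] (Z n) := ih.mono hmono le_rfl
      have hIn : Measurable[⨆ i ∈ Sl (n + 1), 𝓕 i] (I n) :=
        hmemI _ n (Nat.lt_succ_self n)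
      have hXn : ∀ k, Measurable[⨆ i ∈ Sl (n + 1), 𝓕 i] (X n k) := fun k =>
        hmemX _ n k (Nat.lt_succ_self n)
      have hrepr : Z (n + 1) =
          fun ω => (fun m ω' => ∑ j ∈ Finset.range m, X n j ω') (Z n ω + I n ω) ω :=
        funext fun ω => hZ n ω
      rw [hrepr]
      exact measurable_rand_index (hZn.add hIn)
        (fun m => Finset.measurable_sum _ fun j _ => hXn j)
  have hZm : ∀ n, Measurable (Z n) := fun n => (hZsup n).mono (hsuple _) le_rfl
  -- the "immigrant cohort dies immediately" functions
  set Cf : ℕ → Ω → ℕ := fun j ω => ∑ k ∈ Finset.range (I j ω), X j k ω with hCfdef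
  have hCsup : ∀ (t : Set ((ℕ × ℕ) ⊕ ℕ)) (j : ℕ), Sum.inr j ∈ t →
      (∀ k, Sum.inl (j, k) ∈ t) → Measurable[⨆ i ∈ t, 𝓕 i] (Cf j) := by
    intro t j h1 h2
    exact measurable_rand_index (hmemI t j h1)
      (fun m => Finset.measurable_sum _ fun k _ => hmemX t j k (h2 k))
  have hCm : ∀ j, Measurable (Cf j) := fun j =>
    (hCsup Set.univ j trivial (fun k => trivial)).mono (hsuple _) le_rfl
  -- ## Stage 1: analytic facts about `f`, `h`, `pgfComp f`
  have hfmem : ∀ n, ∀ s ∈ Set.Icc (0:ℝ) 1, f n s ∈ Set.Icc (0:ℝ) 1 := by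
    intro n s hs
    rw [hf n s hs]
    exact ⟨pgf_nonneg hs _, pgf_le_one hs (hXmeas n 0)⟩
  have hhmem : ∀ n, ∀ s ∈ Set.Icc (0:ℝ) 1, h n s ∈ Set.Icc (0:ℝ) 1 := by
    intro n s hs
    rw [hh n s hs]
    exact ⟨pgf_nonneg hs _, pgf_le_one hs (hImeas n)⟩
  have h01 : (0:ℝ) ∈ Set.Icc (0:ℝ) 1 := ⟨le_rfl, zero_le_one⟩
  have hfmono : ∀ (n : ℕ) {s t : ℝ}, 0 ≤ s → s ≤ t → t ≤ 1 → f n s ≤ f n t := by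
    intro n s t h0 hst ht1
    rw [hf n s ⟨h0, hst.trans ht1⟩, hf n t ⟨h0.trans hst, ht1⟩]
    exact pgf_mono h0 hst ht1 (hXmeas n 0)
  have hhmono : ∀ (n : ℕ) {s t : ℝ}, 0 ≤ s → s ≤ t → t ≤ 1 → h n s ≤ h n t := by
    intro n s t h0 hst ht1
    rw [hh n s ⟨h0, hst.trans ht1⟩, hh n t ⟨h0.trans hst, ht1⟩]
    exact pgf_mono h0 hst ht1 (hImeas n)
  have hflt : ∀ n, ∀ s ∈ Set.Icc (0:ℝ) 1, s < 1 → f n s < 1 := by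
    intro n s hs hs1
    rw [hf n s hs]
    refine pgf_lt_one hs hs1 (hXmeas n 0) ?_
    rw [← hf n 0 h01]; exact hf0 n
  have hhlt : ∀ n, ∀ s ∈ Set.Icc (0:ℝ) 1, s < 1 → h n s < 1 := by
    intro n s hs hs1
    rw [hh n s hs]
    refine pgf_lt_one hs hs1 (hImeas n) ?_
    rw [← hh n 0 h01]; exact hh0 n
  have hpc_mem : ∀ j len, ∀ s ∈ Set.Icc (0:ℝ) 1, pgfComp f j len s ∈ Set.Icc (0:ℝ) 1 := by
    intro j len
    induction len generalizing j with
    | zero => intro s hs; simpa [pgfComp_zero] using hs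
    | succ len ih =>
      intro s hs
      rw [pgfComp_succ_left]
      exact hfmem j _ (ih (j + 1) s hs)
  have hpc_mono : ∀ j len, ∀ {s t : ℝ}, 0 ≤ s → s ≤ t → t ≤ 1 →
      pgfComp f j len s ≤ pgfComp f j len t := by
    intro j len
    induction len generalizing j with
    | zero => intro s t h0 hst ht1; simpa [pgfComp_zero] using hst
    | succ len ih =>
      intro s t h0 hst ht1
      rw [pgfComp_succ_left]
      have h1 := hpc_mem (j + 1) len s ⟨h0, hst.trans ht1⟩
      have h2 := hpc_mem (j + 1) len t ⟨h0.trans hst, ht1⟩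
      exact hfmono j h1.1 (ih (j + 1) h0 hst ht1) h2.2
  have hpc_lt : ∀ j len, ∀ s ∈ Set.Icc (0:ℝ) 1, s < 1 → pgfComp f j len s < 1 := by
    intro j len
    induction len generalizing j with
    | zero => intro s hs hs1; simpa [pgfComp_zero] using hs1
    | succ len ih =>
      intro s hs hs1
      rw [pgfComp_succ_left]
      exact hflt j _ (hpc_mem (j + 1) len s hs) (ih (j + 1) s hs hs1)
  -- ## Stage 2: generating function of `Z n`
  have hfX : ∀ (n k : ℕ), ∀ s ∈ Set.Icc (0:ℝ) 1, ∫ ω, s ^ X n k ω ∂μ = f n s := by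
    intro n k s hs
    rw [hf n s hs]
    have hmk : Measurable (fun m : ℕ => s ^ m) := measurable_from_top
    calc ∫ ω, s ^ X n k ω ∂μ = ∫ m, s ^ m ∂(Measure.map (X n k) μ) :=
          (integral_map (hXmeas n k).aemeasurable hmk.aestronglyMeasurable).symm
      _ = ∫ m, s ^ m ∂(Measure.map (X n 0) μ) := by rw [hident n k]
      _ = ∫ ω, s ^ X n 0 ω ∂μ :=
          integral_map (hXmeas n 0).aemeasurable hmk.aestronglyMeasurable
  have hXiid : ∀ n, iIndepFun
      (fun k => X n k) μ := by
    intro n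
    have hinj : Function.Injective (fun k : ℕ => (Sum.inl (n, k) : (ℕ × ℕ) ⊕ ℕ)) := by
      intro a b hab
      simpa using hab
    exact iIndepFun_precomp hindep _ hinj
  have hsumXint : ∀ (n c : ℕ), ∀ s ∈ Set.Icc (0:ℝ) 1,
      ∫ ω, s ^ (∑ k ∈ Finset.range c, X n k ω) ∂μ = (f n s) ^ c := by
    intro n c
    induction c with
    | zero => intro s hs; simp
    | succ c ih =>
      intro s hs
      have hIF : IndepFun (∑ j ∈ Finset.range c, X n j) (X n c) μ :=
        (hXiid n).indepFun_sum_range_succ (fun k => hXmeas n k) c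
      have hmk : Measurable (fun m : ℕ => s ^ m) := measurable_from_top
      have hIF2 : IndepFun ((fun m : ℕ => s ^ m) ∘ (∑ j ∈ Finset.range c, X n j))
          ((fun m : ℕ => s ^ m) ∘ (X n c)) μ := hIF.comp hmk hmk
      have hsum_meas : Measurable (fun ω => ∑ k ∈ Finset.range c, X n k ω) :=
        Finset.measurable_sum _ fun k _ => hXmeas n k
      have hint1 : Integrable ((fun m : ℕ => s ^ m) ∘ (∑ j ∈ Finset.range c, X n j)) μ := by
        have : ((fun m : ℕ => s ^ m) ∘ (∑ j ∈ Finset.range c, X n j))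
            = fun ω => s ^ (∑ k ∈ Finset.range c, X n k ω) := by
          funext ω; simp [Finset.sum_apply]
        rw [this]; exact pow_int hs hsum_meas
      have hint2 : Integrable ((fun m : ℕ => s ^ m) ∘ (X n c)) μ := pow_int hs (hXmeas n c)
      have hmul := hIF2.integral_mul_eq_mul_integral hint1.aestronglyMeasurable hint2.aestronglyMeasurable
      have hlhs : ∫ ω, s ^ (∑ k ∈ Finset.range (c + 1), X n k ω) ∂μ
          = ∫ ω, (((fun m : ℕ => s ^ m) ∘ (∑ j ∈ Finset.range c, X n j))
            * ((fun m : ℕ => s ^ m) ∘ (X n c))) ω ∂μ := by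
        refine integral_congr_ae (Eventually.of_forall fun ω => ?_)
        simp [Finset.sum_apply, Finset.sum_range_succ, pow_add]
      rw [hlhs, hmul]
      have h1 : ∫ ω, ((fun m : ℕ => s ^ m) ∘ (∑ j ∈ Finset.range c, X n j)) ω ∂μ
          = (f n s) ^ c := by
        rw [← ih s hs]
        refine integral_congr_ae (Eventually.of_forall fun ω => ?_)
        simp [Finset.sum_apply]
      have h2 : ∫ ω, ((fun m : ℕ => s ^ m) ∘ (X n c)) ω ∂μ = f n s := hfX n c s hs
      rw [h1, h2, pow_succ]
  -- partition events
  set EE : ℕ → ℕ × ℕ → Set Ω := fun n p => {ω | Z n ω = p.1 ∧ I n ω = p.2} with hEEdef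
  have hEmeas : ∀ n (p : ℕ × ℕ), MeasurableSet (EE n p) := fun n p =>
    ((hZm n) (measurableSet_singleton p.1)).inter ((hImeas n) (measurableSet_singleton p.2))
  have hEdisj : ∀ n, Pairwise (Function.onFun Disjoint (EE n)) := by
    intro n p q hpq
    rw [Function.onFun, Set.disjoint_left]
    rintro ω ⟨h1, h2⟩ ⟨h3, h4⟩
    exact hpq (Prod.ext (h1.symm.trans h3) (h2.symm.trans h4))
  have hEcover : ∀ n, (⋃ p : ℕ × ℕ, EE n p) = Set.univ := by
    intro n; ext ω
    simp only [Set.mem_iUnion, Set.mem_univ, iff_true]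
    exact ⟨(Z n ω, I n ω), rfl, rfl⟩
  -- the sets `T n` of indices of level `< n` together with `inr n`
  have hrec : ∀ n, ∀ s ∈ Set.Icc (0:ℝ) 1,
      ∫ ω, s ^ Z (n + 1) ω ∂μ = (∫ ω, (f n s) ^ Z n ω ∂μ) * h n (f n s) := by
    intro n s hs
    have htfs := hfmem n s hs
    set T : Set ((ℕ × ℕ) ⊕ ℕ) := Sl n ∪ {Sum.inr n} with hTdef
    have hinrT : Sum.inr n ∈ T := Set.mem_union_right _ rfl
    have hSlT : (⨆ i ∈ Sl n, 𝓕 i) ≤ ⨆ i ∈ T, 𝓕 i :=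
      biSup_mono fun i hi => Set.mem_union_left _ hi
    have hXcompl : ∀ k, Sum.inl (n, k) ∈ Tᶜ := by
      intro k
      simp only [hTdef, Set.mem_compl_iff, Set.mem_union, Set.mem_singleton_iff]
      push_neg
      exact ⟨by simp [hSldef], by simp⟩
    -- σ-algebra facts for the event `EE n (a,b)`
    have hEmeas' : ∀ p : ℕ × ℕ, MeasurableSet[⨆ i ∈ T, 𝓕 i] (EE n p) := by
      intro p
      exact (((hZsup n).mono hSlT le_rfl) (measurableSet_singleton p.1)).inter
        ((hmemI T n hinrT) (measurableSet_singleton p.2))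
    have hint1 : Integrable (fun ω => s ^ Z (n + 1) ω) μ := pow_int hs (hZm (n + 1))
    have step1 : ∫ ω, s ^ Z (n + 1) ω ∂μ
        = ∑' p : ℕ × ℕ, ∫ ω in EE n p, s ^ Z (n + 1) ω ∂μ :=
      integral_eq_tsum_partition hint1 (hEmeas n) (hEdisj n) (hEcover n)
    have step2 : ∀ p : ℕ × ℕ, ∫ ω in EE n p, s ^ Z (n + 1) ω ∂μ
        = (μ (EE n p)).toReal * (f n s) ^ (p.1 + p.2) := by
      rintro ⟨a, b⟩
      have hsum_meas : Measurable[⨆ i ∈ Tᶜ, 𝓕 i] (fun ω => ∑ k ∈ Finset.range (a + b), X n k ω) :=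
        Finset.measurable_sum _ fun k _ => hmemX _ n k (hXcompl k)
      have hψ : Measurable[⨆ i ∈ Tᶜ, 𝓕 i] (fun ω => s ^ (∑ k ∈ Finset.range (a + b), X n k ω)) :=
        (measurable_from_top (f := fun m : ℕ => s ^ m)).comp hsum_meas
      have hcongr : ∫ ω in EE n (a, b), s ^ Z (n + 1) ω ∂μ
          = ∫ ω in EE n (a, b), s ^ (∑ k ∈ Finset.range (a + b), X n k ω) ∂μ := by
        refine setIntegral_congr_fun (hEmeas n (a, b)) (fun ω hω => ?_)
        rcases hω with ⟨h1, h2⟩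
        rw [hZ n ω, h1, h2]
      rw [hcongr]
      rw [indep_setIntegral (hsuple T) (hsuple Tᶜ) (hIndepT T) (hEmeas' (a, b)) hψ
        (C := 1) (fun ω => by
          rw [Real.norm_eq_abs, abs_of_nonneg (pow_nonneg hs.1 _)]
          exact pow_le_one₀ hs.1 hs.2)]
      rw [hsumXint n (a + b) s hs]
    have hZIint : Integrable (fun ω => (f n s) ^ Z n ω * (f n s) ^ I n ω) μ := by
      refine bdd_integrable ((pow_meas (hZm n)).mul (pow_meas (hImeas n))) (C := 1) (fun ω => ?_)
      rw [Real.norm_eq_abs, abs_of_nonneg (mul_nonneg (pow_nonneg htfs.1 _) (pow_nonneg htfs.1 _))]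
      exact mul_le_one₀ (pow_le_one₀ htfs.1 htfs.2) (pow_nonneg htfs.1 _) (pow_le_one₀ htfs.1 htfs.2)
    have step3 : ∫ ω, (f n s) ^ Z n ω * (f n s) ^ I n ω ∂μ
        = ∑' p : ℕ × ℕ, (μ (EE n p)).toReal * (f n s) ^ (p.1 + p.2) := by
      rw [integral_eq_tsum_partition hZIint (hEmeas n) (hEdisj n) (hEcover n)]
      refine tsum_congr fun p => ?_
      have : ∫ ω in EE n p, (f n s) ^ Z n ω * (f n s) ^ I n ω ∂μ
          = ∫ ω in EE n p, (f n s) ^ (p.1 + p.2) ∂μ := by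
        refine setIntegral_congr_fun (hEmeas n p) (fun ω hω => ?_)
        rcases hω with ⟨h1, h2⟩
        rw [h1, h2, pow_add]
      rw [this, setIntegral_const, smul_eq_mul]
      rfl
    have step4 : ∫ ω, (f n s) ^ Z n ω * (f n s) ^ I n ω ∂μ
        = (∫ ω, (f n s) ^ Z n ω ∂μ) * ∫ ω, (f n s) ^ I n ω ∂μ := by
      have hinr_compl : Sum.inr n ∈ (Sl n)ᶜ := by
        simp [hSldef]
      refine indep_integral_mul (hsuple (Sl n)) (hsuple (Sl n)ᶜ) (hIndepT (Sl n))
        ((measurable_from_top (f := fun m : ℕ => (f n s) ^ m)).comp (hZsup n))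
        ((measurable_from_top (f := fun m : ℕ => (f n s) ^ m)).comp (hmemI _ n hinr_compl))
        (C := 1) (fun ω => ?_) (fun ω => ?_)
      · rw [Real.norm_eq_abs, abs_of_nonneg (pow_nonneg htfs.1 _)]
        exact pow_le_one₀ htfs.1 htfs.2
      · rw [Real.norm_eq_abs, abs_of_nonneg (pow_nonneg htfs.1 _)]
        exact pow_le_one₀ htfs.1 htfs.2
    calc ∫ ω, s ^ Z (n + 1) ω ∂μ
        = ∑' p : ℕ × ℕ, (μ (EE n p)).toReal * (f n s) ^ (p.1 + p.2) := by
          rw [step1]; exact tsum_congr step2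
      _ = ∫ ω, (f n s) ^ Z n ω * (f n s) ^ I n ω ∂μ := step3.symm
      _ = (∫ ω, (f n s) ^ Z n ω ∂μ) * ∫ ω, (f n s) ^ I n ω ∂μ := step4
      _ = (∫ ω, (f n s) ^ Z n ω ∂μ) * h n (f n s) := by rw [← hh n _ htfs]
  -- product formula
  have hprodZ : ∀ n, ∀ s ∈ Set.Icc (0:ℝ) 1,
      ∫ ω, s ^ Z n ω ∂μ = ∏ j ∈ Finset.range n, h j (pgfComp f j (n - j) s) := by
    intro n
    induction n with
    | zero =>
      intro s hs
      have h0 : Z 0 = fun _ => 0 := funext hZ0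
      simp [h0]
    | succ n ih =>
      intro s hs
      rw [hrec n s hs, ih (f n s) (hfmem n s hs), Finset.prod_range_succ]
      congr 1
      · refine Finset.prod_congr rfl fun j hj => ?_
        have hj' : j < n := Finset.mem_range.1 hj
        congr 1
        have h1 : n + 1 - j = (n - j) + 1 := by omega
        have h2 : j + (n - j) = n := by omega
        rw [h1, pgfComp_succ_right, h2]
        rfl
      · have h1 : n + 1 - n = 1 := by omega
        rw [h1, pgfComp_one]
  -- ## Stage 3: the probability that an immigrant cohort dies out immediately
  have hfj0mem : ∀ j, f j 0 ∈ Set.Icc (0:ℝ) 1 := fun j => hfmem j 0 h01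
  have hrr : ∀ j, (μ {ω | Cf j ω = 0}).toReal = h j (f j 0) := by
    intro j
    have hfj0 : f j 0 = (μ {ω | X j 0 ω = 0}).toReal := by
      rw [hf j 0 h01, pgf_zero (hXmeas j 0)]
    -- single-site zero probabilities agree
    have hXk0 : ∀ k, μ {ω | X j k ω = 0} = μ {ω | X j 0 ω = 0} := by
      intro k
      have e1 : {ω | X j k ω = 0} = X j k ⁻¹' {0} := rfl
      have e2 : {ω | X j 0 ω = 0} = X j 0 ⁻¹' {0} := rfl
      rw [e1, e2, ← Measure.map_apply (hXmeas j k) (measurableSet_singleton 0),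
        hident j k, Measure.map_apply (hXmeas j 0) (measurableSet_singleton 0)]
    -- partition over the value of `I j`
    have hSb : ∀ b : ℕ, MeasurableSet {ω | ∑ k ∈ Finset.range b, X j k ω = 0} :=
      fun b => (Finset.measurable_sum _ fun k _ => hXmeas j k) (measurableSet_singleton 0)
    have hpart : {ω | Cf j ω = 0}
        = ⋃ b : ℕ, ({ω | I j ω = b} ∩ {ω | ∑ k ∈ Finset.range b, X j k ω = 0}) := by
      ext ω
      simp only [Set.mem_setOf_eq, Set.mem_iUnion, Set.mem_inter_iff]
      constructor
      · intro h0; exact ⟨I j ω, rfl, h0⟩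
      · rintro ⟨b, hb, h0⟩
        show ∑ k ∈ Finset.range (I j ω), X j k ω = 0
        rw [hb]; exact h0
    have hmeasb : ∀ b : ℕ, MeasurableSet
        ({ω | I j ω = b} ∩ {ω | ∑ k ∈ Finset.range b, X j k ω = 0}) := fun b =>
      ((hImeas j) (measurableSet_singleton b)).inter (hSb b)
    have hdisjb : Pairwise (Function.onFun Disjoint
        (fun b => {ω | I j ω = b} ∩ {ω | ∑ k ∈ Finset.range b, X j k ω = 0})) := by
      intro a b hab
      rw [Function.onFun, Set.disjoint_left]
      rintro ω ⟨h1, _⟩ ⟨h3, _⟩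
      exact hab (h1.symm.trans h3)
    have hmeq : μ {ω | Cf j ω = 0} = ∑' b : ℕ,
        μ ({ω | I j ω = b} ∩ {ω | ∑ k ∈ Finset.range b, X j k ω = 0}) := by
      rw [hpart, measure_iUnion hdisjb hmeasb]
    -- independence of `I j` and the level-`j` offspring
    have hterm : ∀ b : ℕ, μ ({ω | I j ω = b} ∩ {ω | ∑ k ∈ Finset.range b, X j k ω = 0})
        = μ {ω | I j ω = b} * (μ {ω | X j 0 ω = 0}) ^ b := by
      intro b
      have hIm : MeasurableSet[⨆ i ∈ ({Sum.inr j} : Set ((ℕ × ℕ) ⊕ ℕ)), 𝓕 i]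
          {ω | I j ω = b} :=
        (hmemI {Sum.inr j} j rfl) (measurableSet_singleton b)
      have hXmem' : ∀ k, (Sum.inl (j, k) : (ℕ × ℕ) ⊕ ℕ) ∈ ({Sum.inr j} : Set ((ℕ × ℕ) ⊕ ℕ))ᶜ := by
        intro k
        simp
      have hSm : MeasurableSet[⨆ i ∈ ({Sum.inr j} : Set ((ℕ × ℕ) ⊕ ℕ))ᶜ, 𝓕 i]
          {ω | ∑ k ∈ Finset.range b, X j k ω = 0} :=
        (Finset.measurable_sum _ fun k _ => hmemX _ j k (hXmem' k)) (measurableSet_singleton 0)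
      rw [indep_meas_inter (hIndepT {Sum.inr j}) hIm hSm]
      congr 1
      -- the sum vanishes iff every summand vanishes
      have hzero : {ω | ∑ k ∈ Finset.range b, X j k ω = 0}
          = ⋂ i ∈ ((Finset.range b).image fun k => (Sum.inl (j, k) : (ℕ × ℕ) ⊕ ℕ)),
              (Sum.elim (fun p : ℕ × ℕ => X p.1 p.2) I i) ⁻¹' {0} := by
        rw [Finset.set_biInter_finset_image]
        ext ω
        simp only [Set.mem_setOf_eq, Set.mem_iInter, Set.mem_preimage, Set.mem_singleton_iff,
          Finset.sum_eq_zero_iff, Finset.mem_range]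
        rfl
      rw [hzero, hiI.meas_biInter (fun i hi => ⟨{0}, MeasurableSet.of_discrete, rfl⟩),
        Finset.prod_image (fun a _ b' _ hab => by simpa using hab)]
      calc ∏ k ∈ Finset.range b,
            μ (Sum.elim (fun p : ℕ × ℕ => X p.1 p.2) I (Sum.inl (j, k)) ⁻¹' {0})
          = ∏ k ∈ Finset.range b, μ {ω | X j 0 ω = 0} :=
            Finset.prod_congr rfl fun k _ => hXk0 k
        _ = μ {ω | X j 0 ω = 0} ^ b := by rw [Finset.prod_const, Finset.card_range]
    rw [hmeq]
    have hterm' : (∑' b : ℕ, μ ({ω | I j ω = b} ∩ {ω | ∑ k ∈ Finset.range b, X j k ω = 0})).toReal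
        = ∑' b : ℕ, (μ {ω | I j ω = b}).toReal * (f j 0) ^ b := by
      rw [tsum_congr hterm, ENNReal.tsum_toReal_eq (fun b =>
        ENNReal.mul_ne_top (measure_ne_top μ _) (ENNReal.pow_ne_top (measure_ne_top μ _)))]
      refine tsum_congr fun b => ?_
      rw [ENNReal.toReal_mul, ENNReal.toReal_pow, hfj0]
    rw [hterm', hh j (f j 0) (hfj0mem j), pgf_eq_tsum (hfj0mem j) (hImeas j)]
    exact tsum_congr fun b => mul_comm _ _
  -- ## Stage 4: the sets `A n` and the finite approximations `D n m`
  set An : ℕ → Set Ω := fun n => ⋂ j, ⋂ (_ : n ≤ j), {ω | Z j ω = 0} with hAndef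
  set Dn : ℕ → ℕ → Set Ω := fun n m =>
    {ω | Z n ω = 0} ∩ ⋂ j ∈ Finset.Ico n m, {ω | Cf j ω = 0} with hDndef
  have hAeq : ∀ n, An n = ⋂ m, Dn n m := by
    intro n
    ext ω
    simp only [hAndef, hDndef, Set.mem_iInter, Set.mem_inter_iff, Set.mem_setOf_eq]
    constructor
    · intro hω m
      refine ⟨hω n le_rfl, ?_⟩
      intro j hj
      rcases Finset.mem_Ico.1 hj with ⟨hnj, _⟩
      have h1 := hZ j ω
      rw [hω j hnj, zero_add] at h1
      have h2 : Z (j + 1) ω = 0 := hω (j + 1) (hnj.trans j.le_succ)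
      exact h1.symm.trans h2
    · intro hω j hnj
      induction j, hnj using Nat.le_induction with
      | base => exact (hω n).1
      | succ j hnj ih =>
        have h1 := hZ j ω
        rw [ih, zero_add] at h1
        have h2 : Cf j ω = 0 := (hω (j + 1)).2 j (Finset.mem_Ico.2 ⟨hnj, Nat.lt_succ_self j⟩)
        exact h1.trans h2
  -- ## Stage 5: measures of the approximating sets
  have hprbd : ∀ s : Set Ω, (μ s).toReal ≤ 1 := fun s => by
    simpa using ENNReal.toReal_mono (by simp) (prob_le_one (μ := μ) (s := s))
  have hprnn : ∀ s : Set Ω, 0 ≤ (μ s).toReal := fun s => ENNReal.toReal_nonneg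
  have hDmeas : ∀ n m, MeasurableSet (Dn n m) := by
    intro n m
    exact ((hZm n) (measurableSet_singleton 0)).inter
      (Finset.measurableSet_biInter _ fun j _ => (hCm j) (measurableSet_singleton 0))
  have hDmeasure : ∀ n m, μ (Dn n (n + m))
      = μ {ω | Z n ω = 0} * ∏ j ∈ Finset.Ico n (n + m), μ {ω | Cf j ω = 0} := by
    intro n m
    induction m with
    | zero => simp [hDndef]
    | succ m ih =>
      have hIco : Finset.Ico n (n + m + 1) = insert (n + m) (Finset.Ico n (n + m)) :=
        Nat.Ico_succ_right_eq_insert_Ico (Nat.le_add_right n m)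
      have hsplit : Dn n (n + (m + 1)) = Dn n (n + m) ∩ {ω | Cf (n + m) ω = 0} := by
        ext ω
        simp only [hDndef, Set.mem_inter_iff, Set.mem_setOf_eq, Set.mem_iInter,
          show n + (m + 1) = n + m + 1 from rfl, hIco, Finset.mem_insert]
        constructor
        · rintro ⟨h1, h2⟩
          exact ⟨⟨h1, fun j hj => h2 j (Or.inr hj)⟩, h2 _ (Or.inl rfl)⟩
        · rintro ⟨⟨h1, h2⟩, h3⟩
          exact ⟨h1, fun j hj => hj.elim (fun e => e ▸ h3) (h2 j)⟩
      have hDm' : MeasurableSet[⨆ i ∈ Sl (n + m), 𝓕 i] (Dn n (n + m)) := by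
        refine MeasurableSet.inter ?_ ?_
        · exact ((hZsup n).mono
            (biSup_mono fun i (hi : Sum.elim Prod.fst id i < n) =>
              hi.trans_le (Nat.le_add_right n m)) le_rfl) (measurableSet_singleton 0)
        · refine Finset.measurableSet_biInter _ fun j hj => ?_
          rcases Finset.mem_Ico.1 hj with ⟨_, hjlt⟩
          exact (hCsup (Sl (n + m)) j hjlt (fun k => hjlt)) (measurableSet_singleton 0)
      have hCm' : MeasurableSet[⨆ i ∈ (Sl (n + m))ᶜ, 𝓕 i] {ω | Cf (n + m) ω = 0} := by
        have h1 : Sum.inr (n + m) ∈ (Sl (n + m))ᶜ := by simp [hSldef]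
        have h2 : ∀ k, (Sum.inl (n + m, k) : (ℕ × ℕ) ⊕ ℕ) ∈ (Sl (n + m))ᶜ := by
          intro k; simp [hSldef]
        exact (hCsup _ _ h1 h2) (measurableSet_singleton 0)
      rw [hsplit, indep_meas_inter (hIndepT (Sl (n + m))) hDm' hCm', ih,
        show n + (m + 1) = n + m + 1 from rfl, hIco,
        Finset.prod_insert (by simp)]
      ring
  have hDtend : ∀ n, Tendsto (fun m => μ (Dn n m)) atTop (nhds (μ (An n))) := by
    intro n
    rw [hAeq n]
    have hanti : Antitone (Dn n) := by
      intro a b hab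
      rintro ω ⟨h1, h2⟩
      refine ⟨h1, ?_⟩
      rw [Set.mem_iInter₂] at h2 ⊢
      intro j hj
      exact h2 j (Finset.Ico_subset_Ico le_rfl hab hj)
    exact tendsto_measure_iInter_atTop (fun m => (hDmeas n m).nullMeasurableSet)
      hanti ⟨0, measure_ne_top μ _⟩
  set zP : ℕ → ℝ := fun n => (μ {ω | Z n ω = 0}).toReal with hzPdef
  set rr : ℕ → ℝ := fun j => (μ {ω | Cf j ω = 0}).toReal with hrrdef
  have hzP_eq : ∀ n, zP n = ∏ j ∈ Finset.range n, h j (pgfComp f j (n - j) 0) := by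
    intro n
    rw [hzPdef]
    simp only
    rw [← pgf_zero (hZm n), hprodZ n 0 h01]
  have hrr_eq : ∀ j, rr j = h j (f j 0) := hrr
  have hDtoReal : ∀ n, Tendsto (fun m => zP n * ∏ j ∈ Finset.Ico n (n + m), rr j) atTop
      (nhds ((μ (An n)).toReal)) := by
    intro n
    have hc : Tendsto (fun m => n + m) atTop atTop :=
      tendsto_atTop_mono (fun m => Nat.le_add_left m n) tendsto_id
    have h1 : Tendsto (fun m => μ (Dn n (n + m))) atTop (nhds (μ (An n))) := (hDtend n).comp hc
    have h2 := (ENNReal.tendsto_toReal (measure_ne_top μ _)).comp h1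
    refine h2.congr fun m => ?_
    show (μ (Dn n (n + m))).toReal = _
    rw [hDmeasure n m, ENNReal.toReal_mul, ENNReal.toReal_prod]
  have hAmono : Monotone An := by
    intro a b hab ω hω
    rw [hAndef]
    simp only
    rw [Set.mem_iInter₂]
    intro j hbj
    exact Set.mem_iInter₂.1 hω j (hab.trans hbj)
  have hAUnion : Tendsto (fun n => μ (An n)) atTop (nhds (μ (⋃ n, An n))) :=
    tendsto_measure_iUnion_atTop hAmono
  -- monotonicity of the cohort compositions
  have humono : ∀ j, Monotone (fun n => pgfComp f j (n - j) 0) := by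
    intro j
    refine monotone_nat_of_le_succ fun n => ?_
    rcases le_or_gt j n with hjn | hnj
    · have h1 : n + 1 - j = (n - j) + 1 := by omega
      have h2 : j + (n - j) = n := by omega
      calc pgfComp f j (n - j) 0 ≤ pgfComp f j (n - j) (f n 0) :=
            hpc_mono j (n - j) le_rfl (hfmem n 0 h01).1 (hfmem n 0 h01).2
        _ = pgfComp f j (n + 1 - j) 0 := by
            rw [h1, pgfComp_succ_right, h2]
            rfl
    · have h1 : n - j = 0 := by omega
      have h2 : n + 1 - j = 0 := by omega
      rw [h1, h2]
  have hu_ge : ∀ j n, j + 1 ≤ n → f j 0 ≤ pgfComp f j (n - j) 0 := by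
    intro j n hjn
    have h1 := humono j hjn
    simp only at h1
    rwa [show j + 1 - j = 1 by omega, pgfComp_one] at h1
  -- ## Stage 6: conclusion
  have hgoalset : (⋃ n, ⋂ j, ⋂ (_ : n ≤ j), {ω | Z j ω = 0}) = ⋃ n, An n := rfl
  constructor
  · -- `q = 1` implies the two conditions
    intro hq
    have hq' : μ (⋃ n, An n) = 1 := hq
    have htendA : Tendsto (fun n => (μ (An n)).toReal) atTop (nhds 1) := by
      have h2 := (ENNReal.tendsto_toReal (by simp : (1:ENNReal) ≠ ⊤)).comp (hq' ▸ hAUnion)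
      simpa [Function.comp_def] using h2
    have hsubA : ∀ n, An n ⊆ {ω | Z n ω = 0} := by
      intro n ω hω
      exact Set.mem_iInter₂.1 hω n le_rfl
    have hzPle : ∀ n, (μ (An n)).toReal ≤ zP n := fun n =>
      ENNReal.toReal_mono (measure_ne_top μ _) (measure_mono (hsubA n))
    have hzPtend : Tendsto zP atTop (nhds 1) :=
      tendsto_of_tendsto_of_tendsto_of_le_of_le htendA tendsto_const_nhds hzPle
        (fun n => hprbd _)
    have hfac_mem : ∀ n j, h j (pgfComp f j (n - j) 0) ∈ Set.Icc (0:ℝ) 1 :=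
      fun n j => hhmem j _ (hpc_mem j (n - j) 0 h01)
    have hh0n : ∀ n, 1 ≤ n → zP n ≤ h 0 (pgfComp f 0 n 0) := by
      intro n hn
      rw [hzP_eq n]
      have hkey := prod_le_single_factor (Finset.range n)
        (fun j => h j (pgfComp f j (n - j) 0))
        (fun j _ => (hfac_mem n j).1) (fun j _ => (hfac_mem n j).2)
        (Finset.mem_range.2 (by omega : 0 < n))
      simpa using hkey
    have hh0tend : Tendsto (fun n => h 0 (pgfComp f 0 n 0)) atTop (nhds 1) := by
      refine tendsto_of_tendsto_of_tendsto_of_le_of_le' hzPtend tendsto_const_nhds ?_ ?_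
      · filter_upwards [eventually_ge_atTop 1] with n hn
        exact hh0n n hn
      · filter_upwards with n
        exact (hhmem 0 _ (hpc_mem 0 n 0 h01)).2
    have htmono : Monotone (fun n => pgfComp f 0 n 0) := by
      have := humono 0
      simpa using this
    have htbdd : BddAbove (Set.range fun n => pgfComp f 0 n 0) := by
      refine ⟨1, ?_⟩
      rintro x ⟨n, rfl⟩
      exact (hpc_mem 0 n 0 h01).2
    have htlim : Tendsto (fun n => pgfComp f 0 n 0) atTop (nhds (⨆ n, pgfComp f 0 n 0)) :=
      tendsto_atTop_ciSup htmono htbdd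
    have hL0 : 0 ≤ ⨆ n, pgfComp f 0 n 0 := by
      have h1 : pgfComp f 0 0 0 ≤ ⨆ n, pgfComp f 0 n 0 := le_ciSup htbdd 0
      have h2 : (0:ℝ) ≤ pgfComp f 0 0 0 := (hpc_mem 0 0 0 h01).1
      linarith
    have hL1 : (⨆ n, pgfComp f 0 n 0) ≤ 1 := ciSup_le fun n => (hpc_mem 0 n 0 h01).2
    have hLeq : (⨆ n, pgfComp f 0 n 0) = 1 := by
      by_contra hne
      have hlt : (⨆ n, pgfComp f 0 n 0) < 1 := lt_of_le_of_ne hL1 hne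
      have hfb : ∀ n, h 0 (pgfComp f 0 n 0) ≤ h 0 (⨆ n, pgfComp f 0 n 0) := fun n =>
        hhmono 0 (hpc_mem 0 n 0 h01).1 (le_ciSup htbdd n) hL1
      have h3 := le_of_tendsto hh0tend (Eventually.of_forall hfb)
      have h4 : h 0 (⨆ n, pgfComp f 0 n 0) < 1 := hhlt 0 _ ⟨hL0, hL1⟩ hlt
      linarith
    refine ⟨?_, ?_⟩
    · rw [hLeq] at htlim
      exact (tendsto_add_atTop_iff_nat 1).2 htlim
    · -- summability of `1 - h j (f j 0)`
      have hev : ∀ᶠ n in atTop, (1:ℝ)/2 ≤ (μ (An n)).toReal :=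
        htendA.eventually (eventually_ge_nhds (by norm_num : (1:ℝ)/2 < 1))
      obtain ⟨n₀, hn₀⟩ := hev.exists
      have hDge : ∀ m, (1:ℝ)/2 ≤ ∏ j ∈ Finset.Ico n₀ (n₀ + m), rr j := by
        intro m
        have h1 : μ (An n₀) ≤ μ (Dn n₀ (n₀ + m)) := by
          rw [hAeq n₀]
          exact measure_mono (Set.iInter_subset _ _)
        have h2 : (μ (An n₀)).toReal ≤ (μ (Dn n₀ (n₀ + m))).toReal :=
          ENNReal.toReal_mono (measure_ne_top μ _) h1
        have h3 : (μ (Dn n₀ (n₀ + m))).toReal = zP n₀ * ∏ j ∈ Finset.Ico n₀ (n₀ + m), rr j := by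
          rw [hDmeasure n₀ m, ENNReal.toReal_mul, ENNReal.toReal_prod]
        have h5 : (0:ℝ) ≤ ∏ j ∈ Finset.Ico n₀ (n₀ + m), rr j :=
          Finset.prod_nonneg fun j _ => hprnn _
        have h4 : zP n₀ * ∏ j ∈ Finset.Ico n₀ (n₀ + m), rr j
            ≤ ∏ j ∈ Finset.Ico n₀ (n₀ + m), rr j :=
          mul_le_of_le_one_left h5 (hprbd _)
        linarith
      have hrrpos : ∀ j, n₀ ≤ j → 0 < rr j := by
        intro j hj
        by_contra hle
        push_neg at hle
        have h0 : rr j = 0 := le_antisymm hle (hprnn _)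
        have h1 := hDge (j + 1 - n₀)
        rw [show n₀ + (j + 1 - n₀) = j + 1 by omega] at h1
        have h2 : ∏ j' ∈ Finset.Ico n₀ (j + 1), rr j' = 0 :=
          Finset.prod_eq_zero (Finset.mem_Ico.2 ⟨hj, Nat.lt_succ_self j⟩) h0
        rw [h2] at h1
        linarith
      have hsum_bound : ∀ m, ∑ j ∈ Finset.range m, (1 - rr j) ≤ (n₀ : ℝ) + Real.log 2 := by
        intro m
        have hmono_sum : ∑ j ∈ Finset.range m, (1 - rr j)
            ≤ ∑ j ∈ Finset.range (n₀ + m), (1 - rr j) := by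
          refine Finset.sum_le_sum_of_subset_of_nonneg
            (Finset.range_subset_range.2 (by omega)) ?_
          intro j _ _
          linarith [hprbd ({ω | Cf j ω = 0})]
        have hsplit : ∑ j ∈ Finset.range (n₀ + m), (1 - rr j)
            = ∑ j ∈ Finset.range n₀, (1 - rr j) + ∑ j ∈ Finset.Ico n₀ (n₀ + m), (1 - rr j) := by
          simp only [Finset.range_eq_Ico]
          exact (Finset.sum_Ico_consecutive _ (Nat.zero_le n₀) (Nat.le_add_right n₀ m)).symm
        have h1 : ∑ j ∈ Finset.range n₀, (1 - rr j) ≤ (n₀ : ℝ) := by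
          calc ∑ j ∈ Finset.range n₀, (1 - rr j) ≤ ∑ j ∈ Finset.range n₀, 1 :=
              Finset.sum_le_sum (fun j _ => by linarith [hprnn ({ω | Cf j ω = 0})])
            _ = (n₀ : ℝ) := by simp
        have h2 : ∑ j ∈ Finset.Ico n₀ (n₀ + m), (1 - rr j) ≤ Real.log 2 := by
          have hlog : ∀ j ∈ Finset.Ico n₀ (n₀ + m), 1 - rr j ≤ - Real.log (rr j) := by
            intro j hj
            have hpos := hrrpos j (Finset.mem_Ico.1 hj).1
            have := Real.log_le_sub_one_of_pos hpos
            linarith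
          have hP := hDge m
          have hpos2 : (0:ℝ) < ∏ j ∈ Finset.Ico n₀ (n₀ + m), rr j :=
            lt_of_lt_of_le (by norm_num) hP
          calc ∑ j ∈ Finset.Ico n₀ (n₀ + m), (1 - rr j)
              ≤ ∑ j ∈ Finset.Ico n₀ (n₀ + m), (- Real.log (rr j)) := Finset.sum_le_sum hlog
            _ = - Real.log (∏ j ∈ Finset.Ico n₀ (n₀ + m), rr j) := by
                rw [Real.log_prod (fun j hj => (hrrpos j (Finset.mem_Ico.1 hj).1).ne')]
                rw [Finset.sum_neg_distrib]
            _ ≤ Real.log 2 := by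
                have h3 := Real.log_le_log (by norm_num : (0:ℝ) < 1/2) hP
                rw [one_div, Real.log_inv] at h3
                linarith
        linarith
      have hsummable : Summable (fun j => 1 - rr j) :=
        summable_of_sum_range_le (fun j => by linarith [hprbd ({ω | Cf j ω = 0})]) hsum_bound
      exact hsummable.congr (fun j => by rw [hrr_eq j])
  · -- the two conditions imply `q = 1`
    rintro ⟨hT, hS⟩
    have ht1 : Tendsto (fun n => pgfComp f 0 n 0) atTop (nhds 1) :=
      (tendsto_add_atTop_iff_nat 1).1 hT
    have hS' : Summable (fun j => 1 - rr j) := hS.congr (fun j => by rw [hrr_eq j])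
    have hu_tend : ∀ j, Tendsto (fun n => pgfComp f j (n - j) 0) atTop (nhds 1) := by
      intro j
      have hubdd : BddAbove (Set.range fun n => pgfComp f j (n - j) 0) := by
        refine ⟨1, ?_⟩
        rintro x ⟨n, rfl⟩
        exact (hpc_mem j (n - j) 0 h01).2
      have hulim := tendsto_atTop_ciSup (humono j) hubdd
      have hLj_le : (⨆ n, pgfComp f j (n - j) 0) ≤ 1 :=
        ciSup_le fun n => (hpc_mem j (n - j) 0 h01).2
      have hLj_0 : 0 ≤ ⨆ n, pgfComp f j (n - j) 0 := by
        have h1 : pgfComp f j (0 - j) 0 ≤ ⨆ n, pgfComp f j (n - j) 0 := le_ciSup hubdd 0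
        have h2 : (0:ℝ) ≤ pgfComp f j (0 - j) 0 := (hpc_mem j (0 - j) 0 h01).1
        linarith
      have hLj1 : (⨆ n, pgfComp f j (n - j) 0) = 1 := by
        by_contra hne
        have hlt : (⨆ n, pgfComp f j (n - j) 0) < 1 := lt_of_le_of_ne hLj_le hne
        have hkey : ∀ n, j ≤ n → pgfComp f 0 n 0
            ≤ pgfComp f 0 j (⨆ n, pgfComp f j (n - j) 0) := by
          intro n hjn
          have hsplit : pgfComp f 0 n 0 = pgfComp f 0 j (pgfComp f j (n - j) 0) := by
            obtain ⟨k, rfl⟩ : ∃ k, n = j + k := ⟨n - j, by omega⟩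
            rw [show j + k - j = k by omega, pgfComp_append, Nat.zero_add]
            rfl
          rw [hsplit]
          exact hpc_mono 0 j (hpc_mem j (n - j) 0 h01).1 (le_ciSup hubdd n) hLj_le
        have hlt2 : pgfComp f 0 j (⨆ n, pgfComp f j (n - j) 0) < 1 :=
          hpc_lt 0 j _ ⟨hLj_0, hLj_le⟩ hlt
        have h3 := le_of_tendsto ht1 (eventually_atTop.2 ⟨j, hkey⟩)
        linarith
      rw [hLj1] at hulim
      exact hulim
    have hhu_tend : ∀ j, Tendsto (fun n => h j (pgfComp f j (n - j) 0)) atTop (nhds 1) := by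
      intro j
      have hcongr : ∀ n, h j (pgfComp f j (n - j) 0)
          = ∫ ω, (pgfComp f j (n - j) 0) ^ I j ω ∂μ :=
        fun n => hh j _ (hpc_mem j (n - j) 0 h01)
      exact Tendsto.congr (fun n => (hcongr n).symm)
        (pgf_tendsto_one (fun n => hpc_mem j (n - j) 0 h01) (hu_tend j) (hImeas j))
    have hmain : ∀ ε : ℝ, 0 < ε → ε ≤ 1 → 1 - ε ≤ (μ (⋃ n, An n)).toReal := by
      intro ε hε hε1
      obtain ⟨n₁, hn₁⟩ : ∃ n₁, ∑' j, (1 - rr j) - ∑ j ∈ Finset.range n₁, (1 - rr j) ≤ ε / 3 := by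
        have h2 : Tendsto (fun n => ∑' j, (1 - rr j) - ∑ j ∈ Finset.range n, (1 - rr j))
            atTop (nhds 0) := by
          have h3 := (tendsto_const_nhds (x := ∑' j, (1 - rr j))
            (f := (atTop : Filter ℕ))).sub hS'.hasSum.tendsto_sum_nat
          simpa only [sub_self] using h3
        exact (h2.eventually (eventually_le_nhds (by positivity : (0:ℝ) < ε / 3))).exists
      have hrr_nn : ∀ j, 0 ≤ 1 - rr j := fun j => by linarith [hprbd ({ω | Cf j ω = 0})]
      have htail : ∀ a b : ℕ, n₁ ≤ a → ∑ j ∈ Finset.Ico a b, (1 - rr j) ≤ ε / 3 := by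
        intro a b ha
        rcases le_or_gt a b with hab | hab
        · have h1 : ∑ j ∈ Finset.Ico a b, (1 - rr j) ≤ ∑ j ∈ Finset.Ico n₁ b, (1 - rr j) :=
            Finset.sum_le_sum_of_subset_of_nonneg (Finset.Ico_subset_Ico ha le_rfl)
              (fun j _ _ => hrr_nn j)
          have h2 : ∑ j ∈ Finset.Ico n₁ b, (1 - rr j)
              = ∑ j ∈ Finset.range b, (1 - rr j) - ∑ j ∈ Finset.range n₁, (1 - rr j) :=
            Finset.sum_Ico_eq_sub _ (ha.trans hab)
          have h3 : ∑ j ∈ Finset.range b, (1 - rr j) ≤ ∑' j, (1 - rr j) :=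
            Summable.sum_le_tsum _ (fun j _ => hrr_nn j) hS'
          linarith
        · rw [Finset.Ico_eq_empty (by omega)]
          simp
          positivity
      have hev : ∀ᶠ n in atTop, ∀ j ∈ Finset.range n₁,
          1 - h j (pgfComp f j (n - j) 0) ≤ ε / (3 * (n₁ + 1)) := by
        rw [Finset.eventually_all]
        intro j _
        have hlt : 1 - ε / (3 * (n₁ + 1)) < 1 := by
          have : (0:ℝ) < ε / (3 * (n₁ + 1)) := by positivity
          linarith
        filter_upwards [(hhu_tend j).eventually (eventually_ge_nhds hlt)] with n hn
        linarith
      obtain ⟨N, hN1, hN2⟩ := (hev.and (eventually_ge_atTop n₁)).exists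
      have ha_mem : ∀ j, h j (pgfComp f j (N - j) 0) ∈ Set.Icc (0:ℝ) 1 :=
        fun j => hhmem j _ (hpc_mem j (N - j) 0 h01)
      have hzPN : 1 - (2 * ε) / 3 ≤ zP N := by
        rw [hzP_eq N]
        have hW := one_sub_sum_le_prod (Finset.range N)
          (fun j => h j (pgfComp f j (N - j) 0))
          (fun j _ => (ha_mem j).1) (fun j _ => (ha_mem j).2)
        have hsum_split : ∑ j ∈ Finset.range N, (1 - h j (pgfComp f j (N - j) 0))
            = ∑ j ∈ Finset.range n₁, (1 - h j (pgfComp f j (N - j) 0))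
              + ∑ j ∈ Finset.Ico n₁ N, (1 - h j (pgfComp f j (N - j) 0)) := by
          simp only [Finset.range_eq_Ico]
          exact (Finset.sum_Ico_consecutive _ (Nat.zero_le n₁) hN2).symm
        have h1 : ∑ j ∈ Finset.range n₁, (1 - h j (pgfComp f j (N - j) 0)) ≤ ε / 3 := by
          calc ∑ j ∈ Finset.range n₁, (1 - h j (pgfComp f j (N - j) 0))
              ≤ ∑ j ∈ Finset.range n₁, ε / (3 * (n₁ + 1)) :=
                Finset.sum_le_sum (fun j hj => hN1 j hj)
            _ = (n₁ : ℝ) * (ε / (3 * (n₁ + 1))) := by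
                rw [Finset.sum_const, Finset.card_range, nsmul_eq_mul]
            _ = ε * ((n₁ : ℝ) / (3 * ((n₁ : ℝ) + 1))) := by ring
            _ ≤ ε * (1 / 3) := by
                refine mul_le_mul_of_nonneg_left ?_ hε.le
                rw [div_le_div_iff₀ (by positivity) (by norm_num : (0:ℝ) < 3)]
                nlinarith [Nat.cast_nonneg (α := ℝ) n₁]
            _ = ε / 3 := by ring
        have h2 : ∑ j ∈ Finset.Ico n₁ N, (1 - h j (pgfComp f j (N - j) 0)) ≤ ε / 3 := by
          have hptw : ∀ j ∈ Finset.Ico n₁ N, 1 - h j (pgfComp f j (N - j) 0) ≤ 1 - rr j := by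
            intro j hj
            rcases Finset.mem_Ico.1 hj with ⟨hj1, hj2⟩
            have hle : f j 0 ≤ pgfComp f j (N - j) 0 := hu_ge j N (by omega)
            have hmono2 := hhmono j (hfj0mem j).1 hle (hpc_mem j (N - j) 0 h01).2
            rw [hrr_eq j]
            linarith
          calc ∑ j ∈ Finset.Ico n₁ N, (1 - h j (pgfComp f j (N - j) 0))
              ≤ ∑ j ∈ Finset.Ico n₁ N, (1 - rr j) := Finset.sum_le_sum hptw
            _ ≤ ε / 3 := htail n₁ N le_rfl
        have hWs : 1 - ∑ j ∈ Finset.range N, (1 - h j (pgfComp f j (N - j) 0))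
            ≤ ∏ j ∈ Finset.range N, h j (pgfComp f j (N - j) 0) := hW
        rw [hsum_split] at hWs
        linarith
      have hprod_tail : ∀ m, 1 - ε / 3 ≤ ∏ j ∈ Finset.Ico N (N + m), rr j := by
        intro m
        have hW2 := one_sub_sum_le_prod (Finset.Ico N (N + m)) rr
          (fun j _ => hprnn _) (fun j _ => hprbd _)
        have ht2 := htail N (N + m) hN2
        linarith
      have hAN : 1 - ε ≤ (μ (An N)).toReal := by
        refine ge_of_tendsto (hDtoReal N) (Eventually.of_forall fun m => ?_)
        have h1 := hprod_tail m
        have hzpos : 0 ≤ zP N := hprnn _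
        have hppos : 0 ≤ ∏ j ∈ Finset.Ico N (N + m), rr j :=
          Finset.prod_nonneg fun j _ => hprnn _
        have hple : ∏ j ∈ Finset.Ico N (N + m), rr j ≤ 1 :=
          Finset.prod_le_one (fun j _ => hprnn _) (fun j _ => hprbd _)
        have e1 : (1 - (2 * ε) / 3) * (1 - ε / 3)
            ≤ (1 - (2 * ε) / 3) * ∏ j ∈ Finset.Ico N (N + m), rr j :=
          mul_le_mul_of_nonneg_left h1 (by linarith)
        have e2 : (1 - (2 * ε) / 3) * ∏ j ∈ Finset.Ico N (N + m), rr j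
            ≤ zP N * ∏ j ∈ Finset.Ico N (N + m), rr j :=
          mul_le_mul_of_nonneg_right hzPN hppos
        nlinarith
      calc 1 - ε ≤ (μ (An N)).toReal := hAN
        _ ≤ (μ (⋃ n, An n)).toReal :=
          ENNReal.toReal_mono (measure_ne_top μ _) (measure_mono (Set.subset_iUnion An N))
    have hone : (1:ℝ) ≤ (μ (⋃ n, An n)).toReal := by
      by_contra hlt
      push_neg at hlt
      have hq0 : 0 ≤ (μ (⋃ n, An n)).toReal := ENNReal.toReal_nonneg
      have hmain2 := hmain ((1 - (μ (⋃ n, An n)).toReal) / 2) (by linarith) (by linarith)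
      linarith
    refine le_antisymm prob_le_one ?_
    by_contra hlt2
    push_neg at hlt2
    have hfin := (ENNReal.toReal_lt_toReal (measure_ne_top μ _)
      (by simp : (1:ENNReal) ≠ ⊤)).2 hlt2
    simp only [ENNReal.toReal_one] at hfin
    linarith
end

section
/- Let f_n, n ≥ 0, be probability generating functions of ℕ-valued distributions with f_n(0) < 1 and finite positive means m_n and positive finite variances, satisfying the criticality condition (C). Set a_{n+1} = (μ_n/2)·∑_{k=0}^n ν_k/μ_{k−1}, fix λ > 0 and put s_{n+1} = e^{−λ/a_{n+1}}. Then lim_{n→∞} sup_{0 ≤ i ≤ n} (1 − f_{i,n}(s_{n+1}))·(1 + m_i) = 0. -/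
open Filter Asymptotics

private lemma aux_one_sub_pow_le (s : ℝ) (h0 : 0 ≤ s) (h1 : s ≤ 1) (k : ℕ) :
    1 - s ^ k ≤ k * (1 - s) := by
  induction k with
  | zero => simp
  | succ k ih =>
    have hp : s ^ k ≤ 1 := pow_le_one₀ h0 h1
    have hs : s ^ (k + 1) = s * s ^ k := by ring
    push_cast
    nlinarith [mul_le_mul_of_nonneg_left (sub_nonneg.2 hp) h0]

private lemma pgf_facts (q : PMF ℕ) (s : ℝ) (h0 : 0 ≤ s) (h1 : s ≤ 1)
    (hms : Summable (fun k : ℕ => (k : ℝ) * (q k).toReal)) :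
    0 ≤ (∑' k : ℕ, (q k).toReal * s ^ k) ∧
    (∑' k : ℕ, (q k).toReal * s ^ k) ≤ 1 ∧
    1 - (∑' k : ℕ, (q k).toReal * s ^ k) ≤ (∑' k : ℕ, (k : ℝ) * (q k).toReal) * (1 - s) := by
  have hq : Summable (fun k : ℕ => (q k).toReal) := by
    apply ENNReal.summable_toReal
    rw [q.tsum_coe]; exact ENNReal.one_ne_top
  have hq1 : ∑' k : ℕ, (q k).toReal = 1 := by
    rw [← ENNReal.tsum_toReal_eq (fun k => q.apply_ne_top k), q.tsum_coe, ENNReal.toReal_one]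
  have hle : ∀ k : ℕ, (q k).toReal * s ^ k ≤ (q k).toReal := fun k =>
    mul_le_of_le_one_right ENNReal.toReal_nonneg (pow_le_one₀ h0 h1)
  have hnn : ∀ k : ℕ, 0 ≤ (q k).toReal * s ^ k := fun k =>
    mul_nonneg ENNReal.toReal_nonneg (pow_nonneg h0 k)
  have hsm : Summable (fun k : ℕ => (q k).toReal * s ^ k) :=
    Summable.of_nonneg_of_le hnn hle hq
  refine ⟨tsum_nonneg hnn, ?_, ?_⟩
  · calc (∑' k : ℕ, (q k).toReal * s ^ k) ≤ ∑' k : ℕ, (q k).toReal :=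
        Summable.tsum_le_tsum hle hsm hq
    _ = 1 := hq1
  · have e1 : 1 - (∑' k : ℕ, (q k).toReal * s ^ k)
        = ∑' k : ℕ, ((q k).toReal - (q k).toReal * s ^ k) := by
      rw [Summable.tsum_sub hq hsm, hq1]
    have hsum2 : Summable (fun k : ℕ => (q k).toReal - (q k).toReal * s ^ k) := hq.sub hsm
    have hsum3 : Summable (fun k : ℕ => (k : ℝ) * (q k).toReal * (1 - s)) :=
      hms.mul_right (1 - s)
    have e2 : (∑' k : ℕ, (k : ℝ) * (q k).toReal) * (1 - s)
        = ∑' k : ℕ, (k : ℝ) * (q k).toReal * (1 - s) := tsum_mul_right.symm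
    rw [e1, e2]
    refine Summable.tsum_le_tsum (fun k => ?_) hsum2 hsum3
    have : (q k).toReal * (1 - s ^ k) ≤ (q k).toReal * ((k : ℝ) * (1 - s)) :=
      mul_le_mul_of_nonneg_left (aux_one_sub_pow_le s h0 h1 k) ENNReal.toReal_nonneg
    nlinarith [this]

private lemma pgfComp_facts (f : ℕ → ℝ → ℝ) (m : ℕ → ℝ)
    (hmnn : ∀ n, 0 ≤ m n)
    (hub : ∀ n s, 0 ≤ s → s ≤ 1 → 0 ≤ f n s ∧ f n s ≤ 1 ∧ 1 - f n s ≤ m n * (1 - s)) :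
    ∀ len lo s, 0 ≤ s → s ≤ 1 →
      0 ≤ pgfComp f lo len s ∧ pgfComp f lo len s ≤ 1 ∧
       1 - pgfComp f lo len s ≤ (∏ j ∈ Finset.range len, m (lo + j)) * (1 - s) := by
  intro len
  induction len with
  | zero =>
    intro lo s h0 h1
    simp only [pgfComp, List.range'_zero, List.map_nil, List.foldr_nil, id_eq,
      Finset.range_zero, Finset.prod_empty, one_mul]
    exact ⟨h0, h1, le_refl _⟩
  | succ len ih =>
    intro lo s h0 h1
    have hcomp : pgfComp f lo (len + 1) s = f lo (pgfComp f (lo + 1) len s) := by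
      simp [pgfComp, List.range'_succ]
    obtain ⟨ht0, ht1, htl⟩ := ih (lo + 1) s h0 h1
    obtain ⟨h1', h2', h3'⟩ := hub lo _ ht0 ht1
    refine ⟨by rw [hcomp]; exact h1', by rw [hcomp]; exact h2', ?_⟩
    rw [hcomp]
    have hprod : (∏ j ∈ Finset.range (len + 1), m (lo + j))
        = m lo * ∏ j ∈ Finset.range len, m (lo + 1 + j) := by
      rw [Finset.prod_range_succ']
      rw [add_zero, mul_comm]
      congr 1
      exact Finset.prod_congr rfl (fun j _ => by rw [show lo + (j + 1) = lo + 1 + j by omega])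
    calc 1 - f lo (pgfComp f (lo + 1) len s) ≤ m lo * (1 - pgfComp f (lo + 1) len s) := h3'
      _ ≤ m lo * ((∏ j ∈ Finset.range len, m (lo + 1 + j)) * (1 - s)) :=
          mul_le_mul_of_nonneg_left htl (hmnn lo)
      _ = (∏ j ∈ Finset.range (len + 1), m (lo + j)) * (1 - s) := by rw [hprod]; ring


/-- Let `f n` be p.g.f.s of ℕ-valued distributions with
`f_n(0) < 1`, finite positive means `m n` and positive finite variances,
satisfying the criticality condition (C).  With
`a_{n+1} = (μ_n/2)·∑_{k=0}^n ν_k/μ_{k−1}` and `s_{n+1} = e^{−λ/a_{n+1}}` for a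
fixed `λ > 0`, one has `lim_n sup_{0 ≤ i ≤ n} (1 − f_{i,n}(s_{n+1}))(1 + m_i) = 0`. -/
theorem pgf_comp_sup_tendsto_zero
    (p : ℕ → PMF ℕ) (f : ℕ → ℝ → ℝ) (m b ν : ℕ → ℝ) (lam : ℝ) (hlam : 0 < lam)
    (hf : ∀ n, ∀ s ∈ Set.Icc (0 : ℝ) 1, f n s = ∑' k, (p n k).toReal * s ^ k)
    (hf0 : ∀ n, f n 0 < 1)
    -- finite positive means m n = f_n'(1)
    (hmsum : ∀ n, Summable (fun k : ℕ => (k : ℝ) * (p n k).toReal))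
    (hm : ∀ n, m n = ∑' k : ℕ, (k : ℝ) * (p n k).toReal)
    (hmpos : ∀ n, 0 < m n)
    -- finite second factorial moments b n = f_n''(1), and positive variances
    (hbsum : ∀ n, Summable (fun k : ℕ => (k : ℝ) * ((k : ℝ) - 1) * (p n k).toReal))
    (hb : ∀ n, b n = ∑' k : ℕ, (k : ℝ) * ((k : ℝ) - 1) * (p n k).toReal)
    (hvarpos : ∀ n, 0 < b n + m n - (m n) ^ 2)
    -- ν n = f_n''(1) / f_n'(1)²
    (hν : ∀ n, ν n = b n / (m n) ^ 2)
    -- criticality condition (C)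
    (hC1 : Tendsto
      (fun n => ∑ k ∈ Finset.range (n + 1), ν k / ∏ i ∈ Finset.range k, m i)
      atTop atTop)
    (hC2 : (fun n => (∏ i ∈ Finset.range (n + 1), m i)⁻¹) =o[atTop]
      (fun n => ∑ k ∈ Finset.range (n + 1), ν k / ∏ i ∈ Finset.range k, m i)) :
    Tendsto
      (fun n => (Finset.range (n + 1)).sup' Finset.nonempty_range_add_one
        (fun i =>
          (1 - pgfComp f (i + 1) (n - i)
            (Real.exp (-(lam /
              ((∏ j ∈ Finset.range (n + 1), m j) / 2 *
                ∑ k ∈ Finset.range (n + 1), ν k / ∏ j ∈ Finset.range k, m j))))) *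
            (1 + m i)))
      atTop (nhds 0) := by
  set P : ℕ → ℝ := fun n => ∏ j ∈ Finset.range n, m j with hPdef
  set S : ℕ → ℝ := fun n => ∑ k ∈ Finset.range (n + 1), ν k / P k with hSdef
  show Tendsto
      (fun n => (Finset.range (n + 1)).sup' Finset.nonempty_range_add_one
        (fun i =>
          (1 - pgfComp f (i + 1) (n - i)
            (Real.exp (-(lam / (P (n + 1) / 2 * S n))))) * (1 + m i)))
      atTop (nhds 0)
  have hPpos : ∀ n, 0 < P n := fun n => Finset.prod_pos (fun i _ => hmpos i)
  have hbnn : ∀ n, 0 ≤ b n := by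
    intro n
    rw [hb n]
    refine tsum_nonneg (fun k => mul_nonneg ?_ ENNReal.toReal_nonneg)
    rcases Nat.eq_zero_or_pos k with hk | hk
    · simp [hk]
    · have : (1 : ℝ) ≤ (k : ℝ) := by exact_mod_cast hk
      nlinarith
  have hνnn : ∀ n, 0 ≤ ν n := fun n => by
    rw [hν n]; exact div_nonneg (hbnn n) (sq_nonneg _)
  have hSmono : Monotone S := by
    apply monotone_nat_of_le_succ
    intro n
    have : S (n + 1) = S n + ν (n + 1) / P (n + 1) := Finset.sum_range_succ _ _
    rw [this]
    exact le_add_of_nonneg_right (div_nonneg (hνnn _) (hPpos _).le)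
  have hub : ∀ n s, 0 ≤ s → s ≤ 1 →
      0 ≤ f n s ∧ f n s ≤ 1 ∧ 1 - f n s ≤ m n * (1 - s) := by
    intro n s h0 h1
    have h := pgf_facts (p n) s h0 h1 (hmsum n)
    rw [hf n s ⟨h0, h1⟩, hm n]
    exact h
  have hcompB := pgfComp_facts f m (fun n => (hmpos n).le) hub
  -- the eventual nonnegativity of each term
  have hsmem : ∀ n : ℕ, 1 ≤ S n →
      0 ≤ Real.exp (-(lam / (P (n + 1) / 2 * S n))) ∧
      Real.exp (-(lam / (P (n + 1) / 2 * S n))) ≤ 1 := by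
    intro n hSn
    have hden : 0 < P (n + 1) / 2 * S n := by
      have := hPpos (n + 1); nlinarith
    have hx : 0 ≤ lam / (P (n + 1) / 2 * S n) := div_nonneg hlam.le hden.le
    refine ⟨Real.exp_nonneg _, ?_⟩
    calc Real.exp (-(lam / (P (n + 1) / 2 * S n))) ≤ Real.exp 0 :=
        Real.exp_le_exp.2 (by linarith)
    _ = 1 := Real.exp_zero
  rw [tendsto_order]
  constructor
  · intro a ha
    filter_upwards [hC1.eventually_ge_atTop 1] with n hSn
    obtain ⟨hs0, hs1⟩ := hsmem n hSn
    have h0mem : (0 : ℕ) ∈ Finset.range (n + 1) := Finset.mem_range.2 (Nat.succ_pos n)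
    refine lt_of_lt_of_le ?_ (Finset.le_sup' _ h0mem)
    have := (hcompB (n - 0) (0 + 1) _ hs0 hs1).2.1
    have hm0 := hmpos 0

    nlinarith
  · intro ε hε
    set ε' : ℝ := ε / (8 * lam) with hε'def
    have hε'pos : 0 < ε' := by positivity
    obtain ⟨N₀, hN₀⟩ := Filter.eventually_atTop.1 ((hC2.def hε'pos).and (hC1.eventually_ge_atTop 1))
    have hN₀' : ∀ n, N₀ ≤ n → (P (n + 1))⁻¹ ≤ ε' * S n ∧ 1 ≤ S n := by
      intro n hn
      obtain ⟨h1, h2⟩ := hN₀ n hn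
      refine ⟨?_, h2⟩
      rw [Real.norm_eq_abs, Real.norm_eq_abs, abs_of_nonneg (inv_nonneg.2 (hPpos _).le),
        abs_of_nonneg (by linarith)] at h1
      exact h1
    set C : ℝ := ∑ i ∈ Finset.range (N₀ + 2), ((P (i + 1))⁻¹ + (P i)⁻¹) with hCdef
    have hgnn : ∀ i : ℕ, 0 ≤ (P (i + 1))⁻¹ + (P i)⁻¹ := fun i => by
      have := hPpos i; have := hPpos (i + 1); positivity
    have hCnn : 0 ≤ C := Finset.sum_nonneg (fun i _ => hgnn i)
    have hCle : ∀ i, i < N₀ + 2 → (P (i + 1))⁻¹ + (P i)⁻¹ ≤ C :=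
      fun i hi => Finset.single_le_sum (fun j _ => hgnn j) (Finset.mem_range.2 hi)
    obtain ⟨N₁, hN₁⟩ := Filter.eventually_atTop.1 (hC1.eventually_ge_atTop (4 * lam * C / ε + 1))
    filter_upwards [Filter.eventually_ge_atTop (max N₀ N₁)] with n hn
    have hnN₀ : N₀ ≤ n := le_trans (le_max_left _ _) hn
    have hnN₁ : N₁ ≤ n := le_trans (le_max_right _ _) hn
    have hS1 : 1 ≤ S n := (hN₀' n hnN₀).2
    have hSpos : 0 < S n := by linarith
    obtain ⟨hs0, hs1⟩ := hsmem n hS1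
    set sl : ℝ := Real.exp (-(lam / (P (n + 1) / 2 * S n))) with hsldef
    have hsub : 1 - sl ≤ 2 * lam / (P (n + 1) * S n) := by
      have h1 : -(lam / (P (n + 1) / 2 * S n)) + 1 ≤ sl := Real.add_one_le_exp _
      have h2 : lam / (P (n + 1) / 2 * S n) = 2 * lam / (P (n + 1) * S n) := by
        rw [div_eq_div_iff (by have := hPpos (n+1); nlinarith) (by have := hPpos (n+1); nlinarith)]
        ring
      linarith [h2 ▸ h1]
    rw [Finset.sup'_lt_iff]
    intro i hi
    have hin : i ≤ n := Nat.lt_succ_iff.1 (Finset.mem_range.1 hi)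

    -- core bound
    have hQ : P (i + 1) * ∏ j ∈ Finset.range (n - i), m (i + 1 + j) = P (n + 1) := by
      rw [hPdef]
      dsimp only
      rw [← Finset.prod_range_add m (i + 1) (n - i)]
      congr 2
      omega
    have hQpos : 0 < ∏ j ∈ Finset.range (n - i), m (i + 1 + j) :=
      Finset.prod_pos (fun j _ => hmpos _)
    obtain ⟨hF0, hF1, hFl⟩ := hcompB (n - i) (i + 1) sl hs0 hs1
    have hMi : 0 ≤ 1 + m i := by linarith [hmpos i]
    have hterm : (1 - pgfComp f (i + 1) (n - i) sl) * (1 + m i)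
        ≤ 2 * lam / S n * ((P (i + 1))⁻¹ + (P i)⁻¹) := by
      have step1 : (1 - pgfComp f (i + 1) (n - i) sl) * (1 + m i)
          ≤ ((∏ j ∈ Finset.range (n - i), m (i + 1 + j)) * (1 - sl)) * (1 + m i) :=
        mul_le_mul_of_nonneg_right hFl hMi
      have step2 : ((∏ j ∈ Finset.range (n - i), m (i + 1 + j)) * (1 - sl)) * (1 + m i)
          ≤ ((∏ j ∈ Finset.range (n - i), m (i + 1 + j)) * (2 * lam / (P (n + 1) * S n))) * (1 + m i) :=
        mul_le_mul_of_nonneg_right (mul_le_mul_of_nonneg_left hsub hQpos.le) hMi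
      have hPi : P (i + 1) = P i * m i := Finset.prod_range_succ m i
      have step3 : ((∏ j ∈ Finset.range (n - i), m (i + 1 + j)) * (2 * lam / (P (n + 1) * S n))) * (1 + m i)
          = 2 * lam / S n * ((P (i + 1))⁻¹ + (P i)⁻¹) := by
        rw [← hQ, hPi]
        have h1 : P i ≠ 0 := (hPpos i).ne'
        have h2 : m i ≠ 0 := (hmpos i).ne'
        have h3 : S n ≠ 0 := hSpos.ne'
        field_simp
      linarith [step3 ▸ step2]
    rcases lt_or_ge i (N₀ + 2) with hiN | hiN
    · -- small indices
      have h1 : 2 * lam / S n * ((P (i + 1))⁻¹ + (P i)⁻¹) ≤ 2 * lam / S n * C :=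
        mul_le_mul_of_nonneg_left (hCle i hiN) (by positivity)
      have hSn' : 4 * lam * C / ε + 1 ≤ S n := hN₁ n hnN₁
      have hεS : ε * (4 * lam * C / ε + 1) = 4 * lam * C + ε := by field_simp
      have : 2 * lam / S n * C < ε := by
        rw [div_mul_eq_mul_div, div_lt_iff₀ hSpos]
        nlinarith [mul_le_mul_of_nonneg_left hSn' hε.le]
      linarith
    · -- large indices: use hC2
      have hi1 : 1 ≤ i := by omega
      have hb1 : (P (i + 1))⁻¹ ≤ ε' * S i := (hN₀' i (by omega)).1
      have hb2 : (P i)⁻¹ ≤ ε' * S (i - 1) := by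
        have := (hN₀' (i - 1) (by omega)).1
        rwa [show i - 1 + 1 = i by omega] at this
      have hb1' : (P (i + 1))⁻¹ ≤ ε' * S n :=
        hb1.trans (mul_le_mul_of_nonneg_left (hSmono hin) hε'pos.le)
      have hb2' : (P i)⁻¹ ≤ ε' * S n :=
        hb2.trans (mul_le_mul_of_nonneg_left (hSmono (by omega)) hε'pos.le)
      have h1 : 2 * lam / S n * ((P (i + 1))⁻¹ + (P i)⁻¹) ≤ 2 * lam / S n * (2 * (ε' * S n)) :=
        mul_le_mul_of_nonneg_left (by linarith) (by positivity)
      have h2 : 2 * lam / S n * (2 * (ε' * S n)) = ε / 2 := by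
        rw [hε'def]
        field_simp
        ring
      linarith
end
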